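/- arXiv:quant-ph/0410116 — 8 statements merged into one kernel-verified Lean document; each statement's English description precedes it below -/
import Mathlib

section
/- Let d ≥ 2, n ≥ 2 and ℓ be natural numbers with ℓ · d^4 + 1 < d^n. Then the set {c • ((G_1 * ⋯ * G_m) applied to the standard basis vector indexed by the all-zeros string) : c ∈ ℂ, m ≤ ℓ, and each G_i a two-qudit gate} has measure zero in the complex vector space (Fin n → Fin d) → ℂ with respect to its Lebesgue (product) volume measure. -/
open MeasureTheory

/-- `G` is a two-qudit gate on qudits `j`, `k`. -/
def IsTwoQuditGateOn (d n : ℕ) (j k : Fin n)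
    (G : Matrix (Fin n → Fin d) (Fin n → Fin d) ℂ) : Prop :=
  G ∈ Matrix.unitaryGroup (Fin n → Fin d) ℂ ∧
  ∃ V : Matrix (Fin d × Fin d) (Fin d × Fin d) ℂ,
    ∀ x y : Fin n → Fin d,
      ((∀ i, i ≠ j → i ≠ k → x i = y i) → G x y = V (x j, x k) (y j, y k)) ∧
      (¬ (∀ i, i ≠ j → i ≠ k → x i = y i) → G x y = 0)

/-- `G` is a two-qudit gate. -/
def IsTwoQuditGate (d n : ℕ)
    (G : Matrix (Fin n → Fin d) (Fin n → Fin d) ℂ) : Prop :=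
  ∃ j k : Fin n, j ≠ k ∧ IsTwoQuditGateOn d n j k G

/-- The standard basis vector indexed by the string `z`. -/
def stdBasisVec (d n : ℕ) (z : Fin n → Fin d) : (Fin n → Fin d) → ℂ :=
  fun x => if x = z then 1 else 0

noncomputable section ShortCircuitAux

/-- Embed a two-qudit block into the full `n`-qudit matrix space. -/
def embedGate (d n : ℕ) (j k : Fin n) (V : Fin d × Fin d → Fin d × Fin d → ℂ) :
    Matrix (Fin n → Fin d) (Fin n → Fin d) ℂ :=
  Matrix.of fun x y =>
    if ∀ i, i ≠ j → i ≠ k → x i = y i then V (x j, x k) (y j, y k) else 0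

/-- The circuit evaluation map, as a function of the scalar and the gate blocks. -/
def circMap (d n m : ℕ) (σ : Fin m → Fin n × Fin n) (v : (Fin n → Fin d) → ℂ)
    (p : ℂ × (Fin m → Fin d × Fin d → Fin d × Fin d → ℂ)) : (Fin n → Fin d) → ℂ :=
  p.1 • ((List.ofFn fun i => embedGate d n (σ i).1 (σ i).2 (p.2 i)).prod).mulVec v

lemma differentiable_listProd_entry {X : Type*} [NormedAddCommGroup X] [NormedSpace ℂ X]
    {N : Type*} [Fintype N] [DecidableEq N] :
    ∀ L : List (X → Matrix N N ℂ),
      (∀ A ∈ L, ∀ a b, Differentiable ℂ fun x => A x a b) →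
      ∀ a b : N, Differentiable ℂ fun x => ((L.map (fun A => A x) : List (Matrix N N ℂ)).prod) a b := by
  intro L
  induction L with
  | nil =>
    intro _ a b
    simp only [List.map_nil, List.prod_nil, Matrix.one_apply]
    exact differentiable_const _
  | cons A L ih =>
    intro h a b
    simp only [List.map_cons, List.prod_cons, Matrix.mul_apply]
    exact Differentiable.fun_sum fun c _ =>
      (h A List.mem_cons_self a c).mul
        (ih (fun B hB => h B (List.mem_cons_of_mem _ hB)) c b)

lemma differentiable_embed_entry (d n m : ℕ) (j k : Fin n) (i : Fin m)
    (a b : Fin n → Fin d) :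
    Differentiable ℂ fun p : ℂ × (Fin m → Fin d × Fin d → Fin d × Fin d → ℂ) =>
      embedGate d n j k (p.2 i) a b := by
  unfold embedGate
  simp only [Matrix.of_apply]
  split_ifs with h
  · exact differentiable_pi.1 (differentiable_pi.1 (differentiable_pi.1 differentiable_snd i)
      (a j, a k)) (b j, b k)
  · exact differentiable_const 0

lemma differentiable_circMap (d n m : ℕ) (σ : Fin m → Fin n × Fin n)
    (v : (Fin n → Fin d) → ℂ) : Differentiable ℂ (circMap d n m σ v) := by
  rw [differentiable_pi]
  intro y
  have hrw : (fun p : ℂ × (Fin m → Fin d × Fin d → Fin d × Fin d → ℂ) =>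
      circMap d n m σ v p y) =
      fun p => p.1 * ∑ x, ((List.ofFn fun i => embedGate d n (σ i).1 (σ i).2 (p.2 i)).prod) y x * v x := by
    funext p
    simp [circMap, Matrix.mulVec, dotProduct]
  rw [hrw]
  refine differentiable_fst.mul (Differentiable.fun_sum fun x _ =>
    Differentiable.mul ?_ (differentiable_const _))
  have := differentiable_listProd_entry
    (List.ofFn fun i => fun p : ℂ × (Fin m → Fin d × Fin d → Fin d × Fin d → ℂ) =>
      embedGate d n (σ i).1 (σ i).2 (p.2 i))
    (by
      intro A hA a' b'
      rw [List.mem_ofFn] at hA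
      obtain ⟨i, rfl⟩ := hA
      exact differentiable_embed_entry d n m (σ i).1 (σ i).2 i a' b') y x
  simpa [List.map_ofFn, Function.comp_def] using this

lemma finrank_par (d m : ℕ) :
    Module.finrank ℂ (ℂ × (Fin m → Fin d × Fin d → Fin d × Fin d → ℂ)) = 1 + m * d ^ 4 := by
  rw [Module.finrank_prod, Module.finrank_self, Module.finrank_pi_fintype]
  simp only [Module.finrank_pi_fintype, Module.finrank_pi, Fintype.card_prod, Fintype.card_fin,
    Finset.sum_const, smul_eq_mul, Finset.card_univ, Module.finrank_self, mul_one]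
  ring

lemma volume_range_circMap (d n m : ℕ) (σ : Fin m → Fin n × Fin n)
    (v : (Fin n → Fin d) → ℂ) (hdim : m * d ^ 4 + 1 < d ^ n) :
    volume (Set.range (circMap d n m σ v)) = 0 := by
  have hrankE : Module.finrank ℂ ((Fin n → Fin d) → ℂ) = d ^ n := by
    simp [Module.finrank_pi, Fintype.card_fun]
  have hfr : Module.finrank ℂ ((ℂ × (Fin m → Fin d × Fin d → Fin d × Fin d → ℂ)) ×
      (Fin (d ^ n - (1 + m * d ^ 4)) → ℂ)) = Module.finrank ℂ ((Fin n → Fin d) → ℂ) := by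
    rw [Module.finrank_prod, finrank_par, hrankE]
    simp only [Module.finrank_pi, Fintype.card_fin]
    omega
  have e := LinearEquiv.ofFinrankEq (R := ℂ) _ _ hfr
  let Lc : ((Fin n → Fin d) → ℂ) →L[ℂ] ℂ × (Fin m → Fin d × Fin d → Fin d × Fin d → ℂ) :=
    LinearMap.toContinuousLinearMap ((LinearMap.fst ℂ _ _).comp e.symm.toLinearMap)
  have hLsurj : Function.Surjective Lc := by
    intro p
    refine ⟨e (p, 0), ?_⟩
    show (LinearMap.fst ℂ _ _) (e.symm (e (p, 0))) = p
    simp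
  have hLninj : ¬ Function.Injective Lc := by
    intro h
    have h2 : Function.Injective ((LinearMap.fst ℂ _ _).comp e.symm.toLinearMap) := h
    have := LinearMap.finrank_le_finrank_of_injective h2
    rw [hrankE, finrank_par] at this
    omega
  have hrange : Set.range (circMap d n m σ v) = (circMap d n m σ v ∘ Lc) '' Set.univ := by
    rw [Set.image_univ, Set.range_comp, Set.range_eq_univ.2 hLsurj, Set.image_univ]
  rw [hrange]
  have hdiff : Differentiable ℝ (circMap d n m σ v) :=
    (differentiable_circMap d n m σ v).restrictScalars ℝ
  apply addHaar_image_eq_zero_of_det_fderivWithin_eq_zero volume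
    (f' := fun x => (fderiv ℝ (circMap d n m σ v) (Lc x)).comp (Lc.restrictScalars ℝ))
  · intro x _
    exact (((hdiff (Lc x)).hasFDerivAt).comp x
      (Lc.restrictScalars ℝ).hasFDerivAt).hasFDerivWithinAt
  · intro x _
    obtain ⟨a, b, hab, hne⟩ := Function.not_injective_iff.mp hLninj
    have hker : ((fderiv ℝ (circMap d n m σ v) (Lc x)).comp (Lc.restrictScalars ℝ)) (a - b) = 0 := by
      have hz : Lc (a - b) = 0 := by rw [map_sub, hab, sub_self]
      simp only [ContinuousLinearMap.comp_apply, ContinuousLinearMap.coe_restrictScalars']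
      rw [show (Lc : ((Fin n → Fin d) → ℂ) → _) (a - b) = 0 from hz, map_zero]
    have htfae := (LinearMap.hasEigenvalue_zero_tfae
      ((fderiv ℝ (circMap d n m σ v) (Lc x)).comp (Lc.restrictScalars ℝ)).toLinearMap).out 3 5
    exact htfae.2 ⟨a - b, sub_ne_zero.2 hne, hker⟩

end ShortCircuitAux

/-- State-synthesis lower bound: if `ℓ·d⁴ + 1 < dⁿ`, the states (up to scalar)
reachable from `|0…0⟩` by at most `ℓ` two-qudit gates form a Lebesgue-null
subset of the state space. -/
theorem short_state_circuits_measure_zero (d n ℓ : ℕ) (hd : 2 ≤ d) (hn : 2 ≤ n)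
    (hℓ : ℓ * d ^ 4 + 1 < d ^ n) :
    volume {ψ : (Fin n → Fin d) → ℂ |
        ∃ (c : ℂ) (m : ℕ), m ≤ ℓ ∧
          ∃ G : Fin m → Matrix (Fin n → Fin d) (Fin n → Fin d) ℂ,
            (∀ i, IsTwoQuditGate d n (G i)) ∧
            ψ = c • ((List.ofFn G).prod).mulVec
                  (stdBasisVec d n (fun _ => ⟨0, by omega⟩))}
      = 0 := by
  set v : (Fin n → Fin d) → ℂ := stdBasisVec d n (fun _ => ⟨0, by omega⟩) with hv
  apply measure_mono_null (t := ⋃ (m : Fin (ℓ + 1)) (σ : Fin (m : ℕ) → Fin n × Fin n),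
      Set.range (circMap d n m σ v))
  · rintro ψ ⟨c, m, hm, G, hG, rfl⟩
    choose j k h using hG
    choose V hV using fun i => (h i).2.2
    have hGi : ∀ i, G i = embedGate d n (j i) (k i) (V i) := by
      intro i
      funext x y
      obtain ⟨h1, h2⟩ := hV i x y
      by_cases hc : ∀ i', i' ≠ j i → i' ≠ k i → x i' = y i'
      · rw [h1 hc]
        simp only [embedGate, Matrix.of_apply, if_pos hc]
      · rw [h2 hc]
        simp only [embedGate, Matrix.of_apply, if_neg hc]
    refine Set.mem_iUnion.2 ⟨⟨m, Nat.lt_succ_of_le hm⟩, Set.mem_iUnion.2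
      ⟨fun i => (j i, k i), ⟨(c, fun i => V i), ?_⟩⟩⟩
    have hlist : (List.ofFn fun i => embedGate d n (j i) (k i) (V i)) = List.ofFn G := by
      congr 1
      exact funext fun i => (hGi i).symm
    show circMap d n m (fun i => (j i, k i)) v (c, fun i => V i) = _
    simp only [circMap]
    rw [hlist]
  · refine measure_iUnion_null fun m => measure_iUnion_null fun σ => ?_
    apply volume_range_circMap
    have h1 : (m : ℕ) ≤ ℓ := Nat.lt_succ_iff.mp m.2
    have h2 := Nat.mul_le_mul_right (d ^ 4) h1
    omega
end

section
/- Let N ≥ 1 and let U : Matrix (Fin N) (Fin N) ℂ be a unitary matrix. Suppose v : Fin N → (Fin N → ℂ) is an orthonormal basis of eigenvectors of U with U *ᵥ (v j) = λ j • (v j) for scalars λ : Fin N → ℂ. For each j, let W j be a unitary matrix with W j *ᵥ e_j = v j, where e_j is the j-th standard basis vector, and let P j = 1 + (λ j − 1) • E_j, where E_j is the matrix with entry 1 at position (j,j) and 0 elsewhere. Then U = ∏_{j=0}^{N−1} (W j * P j * (W j)ᴴ), the product taken in increasing order of j. -/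
/-! Conjugating the phase `Pⱼ` by `Wⱼ` gives the rank-one update `1 + (λⱼ - 1) vⱼ vⱼᴴ`, which by
orthonormality scales `vⱼ` by `λⱼ` and fixes every other `vₖ`. Hence the ordered product scales each
`vₖ` by `λₖ`, exactly like `U`, and two matrices agreeing on a spanning set are equal. -/

open Matrix

namespace Matrix

variable {n α : Type*} [Fintype n] [DecidableEq n]

theorem mul_single_mul_conjTranspose [Semiring α] [StarRing α] (W : Matrix n n α) (j : n) :
    W * single j j 1 * Wᴴ = vecMulVec (W *ᵥ Pi.single j 1) (star (W *ᵥ Pi.single j 1)) := by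
  rw [single_eq_single_vecMulVec_single, mul_vecMulVec, vecMulVec_mul, star_mulVec,
    Pi.star_single, star_one]

variable [CommRing α]

theorem list_prod_mulVec_eq_pow_count {ι : Type*} [DecidableEq ι] (F : ι → Matrix n n α)
    {x : n → α} {k : ι} {a : α} (hk : F k *ᵥ x = a • x) (hfix : ∀ j ≠ k, F j *ᵥ x = x)
    (l : List ι) : (l.map F).prod *ᵥ x = a ^ l.count k • x := by
  induction l with
  | nil => simp
  | cons j l ih =>
    rw [List.map_cons, List.prod_cons, ← mulVec_mulVec, ih, mulVec_smul, List.count_cons]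
    by_cases hjk : j = k
    · subst hjk
      simp [hk, smul_smul, pow_succ]
    · simp [hfix j hjk, hjk]

variable [StarRing α]

theorem one_add_smul_vecMulVec_mulVec (c : α) (u x : n → α) :
    (1 + c • vecMulVec u (star u)) *ᵥ x = x + (c * (star u ⬝ᵥ x)) • u := by
  rw [add_mulVec, one_mulVec, smul_mulVec, vecMulVec_mulVec, op_smul_eq_smul, smul_smul]

theorem conj_one_add_smul_single {W : Matrix n n α} (hW : Wᴴ * W = 1) (c : α) (j : n) :
    W * (1 + c • single j j 1) * Wᴴ =
      1 + c • vecMulVec (W *ᵥ Pi.single j 1) (star (W *ᵥ Pi.single j 1)) := by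
  rw [mul_add, add_mul, mul_one, mul_eq_one_comm.mp hW, mul_smul_comm, smul_mul_assoc,
    mul_single_mul_conjTranspose]

end Matrix

theorem spectral_factorization_general (N : ℕ)
    (U : Matrix (Fin N) (Fin N) ℂ)
    (v : Fin N → (Fin N → ℂ))
    (horth : ∀ j j' : Fin N,
      (∑ i, (starRingEnd ℂ) (v j i) * v j' i) = if j = j' then 1 else 0)
    (hspan : Submodule.span ℂ (Set.range v) = ⊤)
    (lam : Fin N → ℂ)
    (heig : ∀ j, U.mulVec (v j) = lam j • v j)
    (W : Fin N → Matrix (Fin N) (Fin N) ℂ)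
    (hWu : ∀ j, (W j)ᴴ * W j = 1)
    (hWe : ∀ j, (W j).mulVec (fun i => if i = j then 1 else 0) = v j)
    (P : Fin N → Matrix (Fin N) (Fin N) ℂ)
    (hP : ∀ j, P j = 1 + (lam j - 1) • Matrix.single j j 1) :
    U = (List.ofFn fun j : Fin N => W j * P j * (W j)ᴴ).prod := by
  have hfactor : ∀ j k,
      (W j * P j * (W j)ᴴ) *ᵥ v k = v k + ((lam j - 1) * if j = k then 1 else 0) • v j := by
    intro j k
    have hcol : W j *ᵥ Pi.single j 1 = v j := by
      rw [← hWe j]; congr 1; ext i; simp [Pi.single_apply]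
    rw [hP, conj_one_add_smul_single (hWu j), hcol, one_add_smul_vecMulVec_mulVec, ← horth j k]
    rfl
  refine toLin'.injective (LinearMap.ext_on hspan ?_)
  rintro _ ⟨k, rfl⟩
  rw [toLin'_apply, toLin'_apply, heig, List.ofFn_eq_map,
    list_prod_mulVec_eq_pow_count _ (k := k) (a := lam k), List.count_finRange, pow_one]
  · rw [hfactor, if_pos rfl, mul_one, sub_smul, one_smul, add_sub_cancel]
  · intro j hjk
    simp [hfactor, hjk]

/-- Eigendecomposition-based factorization (Appendix B, eq:spectraldecomposition):
`U = ∏ⱼ Wⱼ Pⱼ Wⱼᴴ` where `Wⱼ` carries `|j⟩` to the eigenvector `vⱼ` and `Pⱼ`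
phases the `j`-th basis state by the eigenvalue `λⱼ`. -/
theorem spectral_factorization (N : ℕ) (hN : 1 ≤ N)
    (U : Matrix (Fin N) (Fin N) ℂ) (hU : Uᴴ * U = 1)
    (v : Fin N → (Fin N → ℂ))
    (horth : ∀ j j' : Fin N,
      (∑ i, (starRingEnd ℂ) (v j i) * v j' i) = if j = j' then 1 else 0)
    (hspan : Submodule.span ℂ (Set.range v) = ⊤)
    (lam : Fin N → ℂ)
    (heig : ∀ j, U.mulVec (v j) = lam j • v j)
    (W : Fin N → Matrix (Fin N) (Fin N) ℂ)
    (hWu : ∀ j, (W j)ᴴ * W j = 1)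
    (hWe : ∀ j, (W j).mulVec (fun i => if i = j then 1 else 0) = v j)
    (P : Fin N → Matrix (Fin N) (Fin N) ℂ)
    (hP : ∀ j, P j = 1 + (lam j - 1) • Matrix.single j j 1) :
    U = (List.ofFn fun j : Fin N => W j * P j * (W j)ᴴ).prod :=
  spectral_factorization_general N U v horth hspan lam heig W hWu hWe P hP
end

section
/- Let d ≥ 2 be an integer and let g : ℕ → ℕ → ℝ satisfy 0 ≤ g n k ≤ (1/2) · d^(2n+2) / d^k for all n ≥ 1 and k ≥ 0. Let f : ℕ → ℕ → ℝ be defined by: f n 0 = 1 for all n ≥ 1; f 1 k = 0 for all k ≥ 1; and f n k = g n k + f (n−1) k + (d−1) · f (n−1) (k−1) for all n ≥ 2 and k ≥ 1. Then f n k ≤ d^(2n+4) / d^k for all n ≥ 1 and all k ≥ 0. -/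
/-- Lemma 6.1 (gross overestimate): the recursion counting `k`-controlled
operations in the Triangle algorithm satisfies `f n k ≤ d^(2n+4)/d^k`. -/
theorem triangle_recursion_bound (d : ℕ) (hd : 2 ≤ d) (g f : ℕ → ℕ → ℝ)
    (hg0 : ∀ n, 1 ≤ n → ∀ k, 0 ≤ g n k)
    (hg : ∀ n, 1 ≤ n → ∀ k, g n k ≤ (1 / 2) * (d : ℝ) ^ (2 * n + 2) / (d : ℝ) ^ k)
    (hf0 : ∀ n, 1 ≤ n → f n 0 = 1)
    (hf1 : ∀ k, 1 ≤ k → f 1 k = 0)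
    (hrec : ∀ n, 2 ≤ n → ∀ k, 1 ≤ k →
      f n k = g n k + f (n - 1) k + ((d : ℝ) - 1) * f (n - 1) (k - 1)) :
    ∀ n, 1 ≤ n → ∀ k, f n k ≤ (d : ℝ) ^ (2 * n + 4) / (d : ℝ) ^ k := by
  have hd1 : (1 : ℝ) ≤ (d : ℝ) := by exact_mod_cast Nat.one_le_of_lt hd
  have hd2 : (2 : ℝ) ≤ (d : ℝ) := by exact_mod_cast hd
  have hd0 : (0 : ℝ) < (d : ℝ) := by linarith
  have hpow : ∀ m : ℕ, (0 : ℝ) < (d : ℝ) ^ m := fun m => pow_pos hd0 m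
  intro n
  induction n with
  | zero => omega
  | succ n ih =>
    intro _ k
    rcases Nat.eq_zero_or_pos n with hn | hn
    · -- n + 1 = 1
      subst hn
      rcases Nat.eq_zero_or_pos k with hk | hk
      · subst hk
        rw [hf0 1 le_rfl]
        simpa using one_le_pow₀ hd1
      · rw [hf1 k hk]
        positivity
    · -- n ≥ 1, inductive step
      rcases Nat.eq_zero_or_pos k with hk | hk
      · subst hk
        rw [hf0 (n + 1) (by omega)]
        simpa using one_le_pow₀ hd1
      · obtain ⟨k, rfl⟩ := Nat.exists_eq_add_of_le hk
        rw [hrec (n + 1) (by omega) (1 + k) (by omega)]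
        simp only [Nat.add_sub_cancel, Nat.add_sub_cancel_left]
        have h1 := hg (n + 1) (by omega) (1 + k)
        have h2 := ih hn (1 + k)
        have h3 := ih hn k
        have hdm1 : (0 : ℝ) ≤ (d : ℝ) - 1 := by linarith
        have h3' : ((d : ℝ) - 1) * f n k ≤ ((d : ℝ) - 1) * ((d : ℝ) ^ (2 * n + 4) / (d : ℝ) ^ k) :=
          mul_le_mul_of_nonneg_left h3 hdm1
        have e2 : 2 * (n + 1) + 2 = 2 * n + 4 := by ring
        have eP : (d : ℝ) ^ (2 * (n + 1) + 4) = (d : ℝ) ^ 2 * (d : ℝ) ^ (2 * n + 4) := by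
          rw [show 2 * (n + 1) + 4 = 2 + (2 * n + 4) by ring, pow_add]
        have eK : (d : ℝ) ^ (1 + k) = (d : ℝ) * (d : ℝ) ^ k := by rw [pow_add, pow_one]
        have t3 : ((d : ℝ) - 1) * ((d : ℝ) ^ (2 * n + 4) / (d : ℝ) ^ k)
            = ((d : ℝ) * (((d : ℝ) - 1) * (d : ℝ) ^ (2 * n + 4))) / ((d : ℝ) * (d : ℝ) ^ k) := by
          rw [mul_div_mul_left _ _ (ne_of_gt hd0), mul_div_assoc]
        have key : (1 / 2) * (d : ℝ) ^ (2 * (n + 1) + 2) / (d : ℝ) ^ (1 + k)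
            + (d : ℝ) ^ (2 * n + 4) / (d : ℝ) ^ (1 + k)
            + ((d : ℝ) - 1) * ((d : ℝ) ^ (2 * n + 4) / (d : ℝ) ^ k)
            ≤ (d : ℝ) ^ (2 * (n + 1) + 4) / (d : ℝ) ^ (1 + k) := by
          rw [e2, eP, eK, t3, ← add_div, ← add_div,
            div_le_div_iff₀ (by positivity) (by positivity)]
          have hprod : (0 : ℝ) < (d : ℝ) ^ (2 * n + 4) * ((d : ℝ) * (d : ℝ) ^ k) :=
            mul_pos (hpow (2 * n + 4)) (mul_pos hd0 (hpow k))
          nlinarith [mul_nonneg (by linarith : (0 : ℝ) ≤ (d : ℝ) - 2) hprod.le]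
        linarith
end

section
/- Fix integers d ≥ 2 and n ≥ 2, a target index ℓ ∈ Fin n, a control word w : Fin n → Option (Fin d) with w ℓ = none, and a matrix V : Matrix (Fin d) (Fin d) ℂ; let A = Λ(ℓ,w,V) be the corresponding controlled one-qudit gate. Let ψ : (Fin n → Fin d) → ℂ and let Z be a set of strings such that ψ s = 0 for every s ∈ Z. Suppose Z is closed under the target-coordinate action within the control support: for every s ∈ Z that matches all controls (i.e. w i = some v implies s i = v for all i) and every a ∈ Fin d, the string obtained from s by replacing its ℓ-th coordinate with (s ℓ) + a lies in Z. Then (A *ᵥ ψ) s = 0 for every s ∈ Z. -/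
/-- The controlled one-qudit gate `Λ(ℓ,w,V)`: applies `V` to qudit `ℓ` iff the
control word `w` matches, and is the identity on non-matching strings. -/
def ctrlGate (d n : ℕ) (ℓ : Fin n) (w : Fin n → Option (Fin d))
    (V : Matrix (Fin d) (Fin d) ℂ) :
    Matrix (Fin n → Fin d) (Fin n → Fin d) ℂ :=
  Matrix.of fun y x =>
    if ∀ i, i ≠ ℓ → y i = x i then
      (if ∀ i v, w i = some v → x i = v then V (y ℓ) (x ℓ)
       else if y ℓ = x ℓ then 1 else 0)
    else 0

/-- Proposition (no_mixing), Appendix A: a controlled one-qudit operator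
preserves a zero pattern `Z` that is invariant under the target-digit action
inside the control support. -/
theorem ctrlGate_preserves_zero_pattern (d n : ℕ) (hd : 2 ≤ d) (hn : 2 ≤ n)
    (ℓ : Fin n) (w : Fin n → Option (Fin d)) (hwℓ : w ℓ = none)
    (V : Matrix (Fin d) (Fin d) ℂ)
    (ψ : (Fin n → Fin d) → ℂ) (Z : Set (Fin n → Fin d))
    (hZ : ∀ s ∈ Z, ψ s = 0)
    (hclosed : ∀ s ∈ Z, (∀ i v, w i = some v → s i = v) →
      ∀ a : Fin d, Function.update s ℓ (s ℓ + a) ∈ Z) :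
    ∀ s ∈ Z, (ctrlGate d n ℓ w V).mulVec ψ s = 0 := by
  intro s hs
  unfold ctrlGate Matrix.mulVec dotProduct
  simp only [Matrix.of_apply]
  apply Finset.sum_eq_zero
  intro x _
  by_cases hoff : ∀ i, i ≠ ℓ → s i = x i
  · have hx : x = Function.update s ℓ (x ℓ) := by
      funext i
      by_cases hi : i = ℓ
      · subst hi; simp
      · simp [Function.update_of_ne hi, hoff i hi]
    by_cases hctrl : ∀ i v, w i = some v → x i = v
    · have hsctrl : ∀ i v, w i = some v → s i = v := by
        intro i v hiv
        have hi : i ≠ ℓ := by rintro rfl; rw [hwℓ] at hiv; exact Option.noConfusion rfl (heq_of_eq hiv)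
        rw [hoff i hi]; exact hctrl i v hiv
      have hxZ : x ∈ Z := by
        have h := hclosed s hs hsctrl (x ℓ - s ℓ)
        haveI : NeZero d := ⟨by omega⟩
        have : s ℓ + (x ℓ - s ℓ) = x ℓ := by rw [add_comm]; exact sub_add_cancel _ _
        rwa [this, ← hx] at h
      rw [hZ x hxZ, mul_zero]
    · simp only [hoff, hctrl, if_true, if_false]
      by_cases heq : s ℓ = x ℓ
      · have : x = s := by rw [hx, ← heq]; simp
        rw [this, hZ s hs, mul_zero]
      · simp [heq]
  · simp [hoff]
end

section
/- Fix integers d ≥ 2 and n ≥ 1, a target position p with 0 ≤ p ≤ n − 1 and a prefix c : Fin p → Fin d. Then for every a ∈ Fin d and every string s ∈ (R1(p,c) ∪ R2(p,c) ∪ R3(p,c)) ∩ S(p,c), the string a •_p s also lies in (R1(p,c) ∪ R2(p,c) ∪ R3(p,c)) ∩ S(p,c). -/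
/-- `R2(p,c)`: strings agreeing with the prefix `c` on coordinates `< p` and
zero on coordinates `> p`. -/
def R2 (d n p : ℕ) (hp : p < n) (c : Fin p → Fin d) : Set (Fin n → Fin d) :=
  {s | (∀ i : Fin p, s (Fin.castLE hp.le i) = c i) ∧
       ∀ i : Fin n, p < (i : ℕ) → (s i : ℕ) = 0}

/-- `R3(p,c)`: strings whose restriction to coordinates `0,…,p−1` is strictly
lex-greater than `c` (coordinate 0 most significant). -/
def R3 (d n p : ℕ) (hp : p < n) (c : Fin p → Fin d) : Set (Fin n → Fin d) :=
  {s | ∃ q : Fin p, (∀ i : Fin p, (i : ℕ) < (q : ℕ) → s (Fin.castLE hp.le i) = c i) ∧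
       (c q : ℕ) < (s (Fin.castLE hp.le q) : ℕ)}

/-- `R1(p,c)`: strings agreeing with `c` up to some `q < p`, strictly smaller
than `c` at `q`, and zero beyond `q`. -/
def R1 (d n p : ℕ) (hp : p < n) (c : Fin p → Fin d) : Set (Fin n → Fin d) :=
  {s | ∃ q : Fin p, (∀ i : Fin p, (i : ℕ) < (q : ℕ) → s (Fin.castLE hp.le i) = c i) ∧
       (s (Fin.castLE hp.le q) : ℕ) < (c q : ℕ) ∧
       ∀ i : Fin n, (q : ℕ) < (i : ℕ) → (s i : ℕ) = 0}

/-- The control set `S(p,c)`: if the prefix `c` has a nonzero digit, the strings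
agreeing with `c` at the last such position; otherwise all strings. -/
def ctrlSet (d n p : ℕ) (hp : p < n) (c : Fin p → Fin d) : Set (Fin n → Fin d) :=
  {s | ∀ m : Fin p,
    ((c m : ℕ) ≠ 0 ∧ ∀ i : Fin p, (m : ℕ) < (i : ℕ) → (c i : ℕ) = 0) →
      s (Fin.castLE hp.le m) = c m}

/-!
The action only changes coordinate `p`. Membership in `R2`, `R3` and `S` does not depend on
that coordinate (`R2` looks at coordinates `≠ p`, `R3` and `S` at coordinates `< p`), so these
sets are invariant. `R1` does constrain coordinate `p`, but `R1 ∩ S = ∅`: if `s ∈ R1` with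
witness `q`, then `c q > s q ≥ 0`, so the last nonzero digit `m` of `c` satisfies `q ≤ m`, and
`s m = c m ≠ 0` contradicts `s q < c q` when `m = q` and `s m = 0` when `m > q`.
-/

lemma exists_greatest_of_mem {ι : Type*} [Fintype ι] [LinearOrder ι] {P : ι → Prop}
    {q : ι} (hq : P q) : ∃ m, q ≤ m ∧ P m ∧ ∀ i, m < i → ¬ P i := by
  classical
  obtain ⟨m, hm, hmax⟩ :=
    (Finset.univ.filter P).exists_max_image id ⟨q, Finset.mem_filter.2 ⟨Finset.mem_univ q, hq⟩⟩
  refine ⟨m, hmax q (by simpa using hq), (Finset.mem_filter.1 hm).2, fun i hmi hi => ?_⟩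
  exact (hmax i (by simpa using hi)).not_gt hmi

section UpdateTarget

variable {d n p : ℕ} {hp : p < n} {c : Fin p → Fin d} {s : Fin n → Fin d}

lemma update_target_apply_castLE (x : Fin d) (i : Fin p) :
    Function.update s ⟨p, hp⟩ x (Fin.castLE hp.le i) = s (Fin.castLE hp.le i) :=
  Function.update_of_ne (Fin.ne_of_val_ne i.isLt.ne) _ _

lemma update_target_mem_R2 (x : Fin d) (hs : s ∈ R2 d n p hp c) :
    Function.update s ⟨p, hp⟩ x ∈ R2 d n p hp c := by
  refine ⟨fun i => (update_target_apply_castLE x i).trans (hs.1 i), fun i hi => ?_⟩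
  rw [Function.update_of_ne (Fin.ne_of_val_ne hi.ne')]
  exact hs.2 i hi

lemma update_target_mem_R3 (x : Fin d) (hs : s ∈ R3 d n p hp c) :
    Function.update s ⟨p, hp⟩ x ∈ R3 d n p hp c := by
  obtain ⟨q, hagree, hgt⟩ := hs
  refine ⟨q, fun i hi => (update_target_apply_castLE x i).trans (hagree i hi), ?_⟩
  rwa [update_target_apply_castLE]

lemma update_target_mem_ctrlSet (x : Fin d) (hs : s ∈ ctrlSet d n p hp c) :
    Function.update s ⟨p, hp⟩ x ∈ ctrlSet d n p hp c := fun m hm =>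
  (update_target_apply_castLE x m).trans (hs m hm)

end UpdateTarget

lemma disjoint_R1_ctrlSet (d n p : ℕ) (hp : p < n) (c : Fin p → Fin d) :
    Disjoint (R1 d n p hp c) (ctrlSet d n p hp c) := by
  refine Set.disjoint_left.2 fun s ⟨q, _, hlt, hzero⟩ hS => ?_
  obtain ⟨m, hqm, hcm, hlast⟩ :=
    exists_greatest_of_mem (P := fun i => (c i : ℕ) ≠ 0) (q := q) (by omega)
  have hsm : s (Fin.castLE hp.le m) = c m :=
    hS m ⟨hcm, fun i hi => not_not.1 (hlast i hi)⟩
  rcases hqm.eq_or_lt with rfl | hqm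
  · rw [hsm] at hlt
    exact lt_irrefl _ hlt
  · have := hzero (Fin.castLE hp.le m) hqm
    rw [hsm] at this
    exact hcm this

/-- Lemma (Sorbit), Appendix A: the set `(R1 ∪ R2 ∪ R3) ∩ S` is invariant under
the mod-`d` action on the target coordinate `p`. -/
theorem Sorbit (d n p : ℕ) (hn : 1 ≤ n) (hp : p ≤ n - 1)
    (c : Fin p → Fin d) :
    ∀ a : Fin d,
      ∀ s ∈ (R1 d n p (by omega) c ∪ R2 d n p (by omega) c ∪ R3 d n p (by omega) c) ∩
          ctrlSet d n p (by omega) c,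
        Function.update s ⟨p, by omega⟩ (s ⟨p, by omega⟩ + a) ∈
          (R1 d n p (by omega) c ∪ R2 d n p (by omega) c ∪ R3 d n p (by omega) c) ∩
            ctrlSet d n p (by omega) c := by
  intro a s ⟨hR, hS⟩
  refine ⟨?_, update_target_mem_ctrlSet _ hS⟩
  rcases hR with (h1 | h2) | h3
  · exact absurd hS (Set.disjoint_left.1 (disjoint_R1_ctrlSet d n p _ c) h1)
  · exact Or.inl (Or.inr (update_target_mem_R2 _ h2))
  · exact Or.inr (update_target_mem_R3 _ h3)
end

section
/- Fix integers d ≥ 2, n ≥ 2, a target position p with 1 ≤ p ≤ n − 1, and a prefix c : Fin p → Fin d whose last digit satisfies c (p−1) = d − 1. Define the successor prefix c' : Fin (p−1) → Fin d as the restriction of c to its first p − 1 coordinates, with successor target position p − 1. Let Z = {s : s i = c i for all i < p, s p ≠ 0, and s i = 0 for all i > p}. Then R1(p,c) ∪ R2(p,c) ∪ R3(p,c) = R1(p−1,c') ∪ R2(p−1,c') ∪ R3(p−1,c') ∪ Z, and the four sets R1(p−1,c'), R2(p−1,c'), R3(p−1,c'), Z are pairwise disjoint. -/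
/-! Since the dropped digit `c (p - 1) = d - 1` is the largest digit, no string exceeds `c` at
position `p - 1`, so `R3` does not change, and a string in `R2(p-1,c')` lies in `R1(p,c)` or
`R2(p,c)` according as its digit at `p - 1` is below `d - 1` or equal to it. Conversely `R1(p,c)`
splits by whether the first deviation from `c` is before `p - 1` (giving `R1(p-1,c')`) or at it
(giving `R2(p-1,c')`), and `R2(p,c)` by whether the digit at `p` vanishes (`R2(p-1,c')`) or not
(`Z`). The disjointness holds because a string that agrees with a prefix is neither lex-smaller
nor lex-larger than it. -/

section

variable {d n : ℕ}

theorem notMem_R1_of_forall_eq {p : ℕ} (hp : p < n) {c : Fin p → Fin d} {s : Fin n → Fin d}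
    (hs : ∀ i : Fin p, s (Fin.castLE hp.le i) = c i) : s ∉ R1 d n p hp c := by
  rintro ⟨q, -, hlt, -⟩
  rw [hs q] at hlt
  exact lt_irrefl _ hlt

theorem notMem_R3_of_forall_eq {p : ℕ} (hp : p < n) {c : Fin p → Fin d} {s : Fin n → Fin d}
    (hs : ∀ i : Fin p, s (Fin.castLE hp.le i) = c i) : s ∉ R3 d n p hp c := by
  rintro ⟨q, -, hlt⟩
  rw [hs q] at hlt
  exact lt_irrefl _ hlt

theorem R1_inter_R2_eq_empty {p : ℕ} (hp : p < n) (c : Fin p → Fin d) :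
    R1 d n p hp c ∩ R2 d n p hp c = ∅ :=
  Set.eq_empty_iff_forall_notMem.mpr fun _ ⟨h1, h2⟩ => notMem_R1_of_forall_eq hp h2.1 h1

theorem R2_inter_R3_eq_empty {p : ℕ} (hp : p < n) (c : Fin p → Fin d) :
    R2 d n p hp c ∩ R3 d n p hp c = ∅ :=
  Set.eq_empty_iff_forall_notMem.mpr fun _ ⟨h2, h3⟩ => notMem_R3_of_forall_eq hp h2.1 h3

theorem R1_inter_R3_eq_empty {p : ℕ} (hp : p < n) (c : Fin p → Fin d) :
    R1 d n p hp c ∩ R3 d n p hp c = ∅ := by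
  refine Set.eq_empty_iff_forall_notMem.mpr ?_
  rintro s ⟨⟨q, hq_eq, hq_lt, -⟩, ⟨r, hr_eq, hr_lt⟩⟩
  rcases lt_trichotomy (q : ℕ) r with h | h | h
  · rw [hr_eq q h] at hq_lt
    exact lt_irrefl _ hq_lt
  · obtain rfl := Fin.ext h
    exact lt_asymm hq_lt hr_lt
  · rw [hq_eq r h] at hr_lt
    exact lt_irrefl _ hr_lt

theorem forall_lt_eq_iff_of_restrict {m p : ℕ} (hm : m < n) (hp : p < n) (hmp : m ≤ p)
    {c : Fin p → Fin d} {c' : Fin m → Fin d} (hc' : ∀ i : Fin m, c' i = c ⟨i, by omega⟩)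
    {s : Fin n → Fin d} {k : ℕ} (hk : k ≤ m) :
    (∀ i : Fin m, (i : ℕ) < k → s (Fin.castLE hm.le i) = c' i) ↔
      ∀ i : Fin p, (i : ℕ) < k → s (Fin.castLE hp.le i) = c i := by
  constructor
  · intro h i hi
    have hi' := h ⟨i, by omega⟩ hi
    rwa [hc'] at hi'
  · intro h i hi
    rw [hc']
    exact h ⟨i, by omega⟩ hi

theorem forall_eq_of_mem_R2_of_restrict {m p : ℕ} (hm : m < n) (hp : p < n) (hmp : m ≤ p)
    {c : Fin p → Fin d} {c' : Fin m → Fin d} (hc' : ∀ i : Fin m, c' i = c ⟨i, by omega⟩)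
    {s : Fin n → Fin d} (hs : s ∈ R2 d n p hp c) :
    ∀ i : Fin m, s (Fin.castLE hm.le i) = c' i := fun i =>
  (forall_lt_eq_iff_of_restrict hm hp hmp hc' le_rfl).mpr (fun j _ => hs.1 j) i i.isLt

theorem R1_subset_R1_of_restrict {m p : ℕ} (hm : m < n) (hp : p < n) (hmp : m ≤ p)
    {c : Fin p → Fin d} {c' : Fin m → Fin d} (hc' : ∀ i : Fin m, c' i = c ⟨i, by omega⟩) :
    R1 d n m hm c' ⊆ R1 d n p hp c := by
  rintro s ⟨q, hq_eq, hq_lt, hq_zero⟩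
  refine ⟨⟨q, by omega⟩, ?_, ?_, hq_zero⟩
  · exact (forall_lt_eq_iff_of_restrict hm hp hmp hc' q.isLt.le).mp hq_eq
  · rwa [hc'] at hq_lt

theorem R1_subset_R1_union_R2_of_restrict {m p : ℕ} (hm : m < n) (hp : p < n) (hmp : m + 1 = p)
    {c : Fin p → Fin d} {c' : Fin m → Fin d} (hc' : ∀ i : Fin m, c' i = c ⟨i, by omega⟩) :
    R1 d n p hp c ⊆ R1 d n m hm c' ∪ R2 d n m hm c' := by
  rintro s ⟨q, hq_eq, hq_lt, hq_zero⟩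
  by_cases hqm : (q : ℕ) < m
  · have hq_eq' := (forall_lt_eq_iff_of_restrict hm hp (by omega) hc' hqm.le).mpr hq_eq
    left
    refine ⟨⟨q, hqm⟩, hq_eq', ?_, hq_zero⟩
    rwa [hc']
  · have hq : (q : ℕ) = m := by omega
    have hs := (forall_lt_eq_iff_of_restrict hm hp (by omega) hc' le_rfl).mpr (hq ▸ hq_eq)
    right
    exact ⟨fun i => hs i i.isLt, fun i hi => hq_zero i (hq ▸ hi)⟩

theorem R2_subset_R2_union_of_restrict {m p : ℕ} (hm : m < n) (hp : p < n) (hmp : m + 1 = p)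
    {c : Fin p → Fin d} {c' : Fin m → Fin d} (hc' : ∀ i : Fin m, c' i = c ⟨i, by omega⟩) :
    R2 d n p hp c ⊆ R2 d n m hm c' ∪ {s | (s ⟨p, hp⟩ : ℕ) ≠ 0} := by
  intro s hs
  by_cases hsp : (s ⟨p, hp⟩ : ℕ) = 0
  · refine .inl ⟨forall_eq_of_mem_R2_of_restrict hm hp (by omega) hc' hs, fun i hi => ?_⟩
    rcases (show p < (i : ℕ) ∨ (i : ℕ) = p by omega) with hi | hi
    · exact hs.2 i hi
    · rwa [show i = ⟨p, hp⟩ from Fin.ext hi]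
  · exact .inr hsp

theorem R2_subset_R1_union_R2_of_restrict {m p : ℕ} (hm : m < n) (hp : p < n) (hmp : m + 1 = p)
    {c : Fin p → Fin d} {c' : Fin m → Fin d} (hc' : ∀ i : Fin m, c' i = c ⟨i, by omega⟩)
    (hlast : (c ⟨m, by omega⟩ : ℕ) = d - 1) :
    R2 d n m hm c' ⊆ R1 d n p hp c ∪ R2 d n p hp c := by
  rintro s ⟨hs_eq, hs_zero⟩
  have hlt := (forall_lt_eq_iff_of_restrict hm hp (by omega) hc' le_rfl).mp fun i _ => hs_eq i
  by_cases hsm : (s ⟨m, hm⟩ : ℕ) < d - 1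
  · exact .inl ⟨⟨m, by omega⟩, hlt, hlast ▸ hsm, hs_zero⟩
  · have hsm' : s ⟨m, hm⟩ = c ⟨m, by omega⟩ := Fin.ext (by omega)
    refine .inr ⟨fun i => ?_, fun i hi => hs_zero i (by omega)⟩
    rcases (show (i : ℕ) < m ∨ (i : ℕ) = m by omega) with hi | hi
    · exact hlt i hi
    · rw [show i = ⟨m, by omega⟩ from Fin.ext hi]
      exact hsm'

theorem R3_eq_R3_of_restrict {m p : ℕ} (hm : m < n) (hp : p < n) (hmp : m + 1 = p)
    {c : Fin p → Fin d} {c' : Fin m → Fin d} (hc' : ∀ i : Fin m, c' i = c ⟨i, by omega⟩)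
    (hlast : (c ⟨m, by omega⟩ : ℕ) = d - 1) :
    R3 d n p hp c = R3 d n m hm c' := by
  ext s
  constructor
  · rintro ⟨q, hq_eq, hq_lt⟩
    have hqm : (q : ℕ) < m := by
      by_contra! hqm
      rw [show q = ⟨m, by omega⟩ from Fin.ext (show (q : ℕ) = m by omega), hlast] at hq_lt
      exact absurd hq_lt (not_lt.mpr (Nat.le_sub_one_of_lt (Fin.is_lt _)))
    have hq_eq' := (forall_lt_eq_iff_of_restrict hm hp (by omega) hc' hqm.le).mpr hq_eq
    refine ⟨⟨q, hqm⟩, hq_eq', ?_⟩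
    rwa [hc']
  · rintro ⟨q, hq_eq, hq_lt⟩
    have hq_eq' := (forall_lt_eq_iff_of_restrict hm hp (by omega) hc' q.isLt.le).mp hq_eq
    refine ⟨⟨q, by omega⟩, hq_eq', ?_⟩
    rwa [hc'] at hq_lt

theorem R1_union_R2_union_R3_eq_of_restrict {m p : ℕ} (hm : m < n) (hp : p < n)
    (hmp : m + 1 = p) {c : Fin p → Fin d} {c' : Fin m → Fin d}
    (hc' : ∀ i : Fin m, c' i = c ⟨i, by omega⟩)
    (hlast : (c ⟨m, by omega⟩ : ℕ) = d - 1) :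
    R1 d n p hp c ∪ R2 d n p hp c ∪ R3 d n p hp c =
      R1 d n m hm c' ∪ R2 d n m hm c' ∪ R3 d n m hm c' ∪
        R2 d n p hp c ∩ {s | (s ⟨p, hp⟩ : ℕ) ≠ 0} := by
  have hR3 := R3_eq_R3_of_restrict hm hp hmp hc' hlast
  apply Set.Subset.antisymm
  · rintro s ((h1 | h2) | h3)
    · rcases R1_subset_R1_union_R2_of_restrict hm hp hmp hc' h1 with h | h
      exacts [.inl (.inl (.inl h)), .inl (.inl (.inr h))]
    · rcases R2_subset_R2_union_of_restrict hm hp hmp hc' h2 with h | h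
      exacts [.inl (.inl (.inr h)), .inr ⟨h2, h⟩]
    · exact .inl (.inr (hR3 ▸ h3))
  · rintro s (((h1 | h2) | h3) | hz)
    · exact .inl (.inl (R1_subset_R1_of_restrict hm hp (by omega) hc' h1))
    · exact .inl (R2_subset_R1_union_R2_of_restrict hm hp hmp hc' hlast h2)
    · exact .inr (hR3 ▸ h3)
    · exact .inl (.inr hz.1)

end

/-- Lemma (Zlemma), Appendix A, case `c_{p−1} = d − 1`: passing to the next
♣-sequence term (whose prefix is `c` with its last digit dropped) splits
`R1 ∪ R2 ∪ R3` into the successor sets plus the newly zeroed set `Z`,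
disjointly. -/
theorem Zlemma_pop (d n p : ℕ)
    (hp1 : 1 ≤ p) (hp2 : p ≤ n - 1)
    (c : Fin p → Fin d) (hlast : (c ⟨p - 1, by omega⟩ : ℕ) = d - 1)
    (c' : Fin (p - 1) → Fin d)
    (hc' : ∀ i : Fin (p - 1), c' i = c ⟨i, by omega⟩)
    (Z : Set (Fin n → Fin d))
    (hZ : Z = {s | (∀ i : Fin p, s (Fin.castLE (by omega) i) = c i) ∧
        (s ⟨p, by omega⟩ : ℕ) ≠ 0 ∧ ∀ i : Fin n, p < (i : ℕ) → (s i : ℕ) = 0}) :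
    (R1 d n p (by omega) c ∪ R2 d n p (by omega) c ∪ R3 d n p (by omega) c
      = R1 d n (p - 1) (by omega) c' ∪ R2 d n (p - 1) (by omega) c' ∪
        R3 d n (p - 1) (by omega) c' ∪ Z) ∧
    R1 d n (p - 1) (by omega) c' ∩ R2 d n (p - 1) (by omega) c' = ∅ ∧
    R1 d n (p - 1) (by omega) c' ∩ R3 d n (p - 1) (by omega) c' = ∅ ∧
    R1 d n (p - 1) (by omega) c' ∩ Z = ∅ ∧
    R2 d n (p - 1) (by omega) c' ∩ R3 d n (p - 1) (by omega) c' = ∅ ∧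
    R2 d n (p - 1) (by omega) c' ∩ Z = ∅ ∧
    R3 d n (p - 1) (by omega) c' ∩ Z = ∅ := by
  have hp : p < n := by omega
  have hm : p - 1 < n := by omega
  have hmp : p - 1 + 1 = p := by omega
  replace hZ : Z = R2 d n p hp c ∩ {s | (s ⟨p, hp⟩ : ℕ) ≠ 0} := by
    subst hZ
    ext s
    simp only [R2, Set.mem_inter_iff, Set.mem_ofPred_eq]
    tauto
  subst hZ
  have hZ_eq := fun s => forall_eq_of_mem_R2_of_restrict (s := s) hm hp (by omega) hc'
  refine ⟨R1_union_R2_union_R3_eq_of_restrict hm hp hmp hc' hlast, R1_inter_R2_eq_empty hm c',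
    R1_inter_R3_eq_empty hm c', ?_, R2_inter_R3_eq_empty hm c', ?_, ?_⟩
  · exact Set.eq_empty_iff_forall_notMem.mpr fun s ⟨h1, hz, _⟩ =>
      notMem_R1_of_forall_eq hm (hZ_eq s hz) h1
  · exact Set.eq_empty_iff_forall_notMem.mpr fun s ⟨h2, _, hsp⟩ =>
      hsp (h2.2 ⟨p, hp⟩ (show p - 1 < p by omega))
  · exact Set.eq_empty_iff_forall_notMem.mpr fun s ⟨h3, hz, _⟩ =>
      notMem_R3_of_forall_eq hm (hZ_eq s hz) h3
end

section
/- Fix integers d ≥ 2 and n ≥ 2, a target index ℓ ∈ Fin n, a control word w : Fin n → Option (Fin d) with w ℓ = none, a matrix V : Matrix (Fin d) (Fin d) ℂ, and digits b : Fin n → Fin d. Let T be the matrix on strings defined by T x y = 1 if x k = (y k) + (b k) for all k (addition mod d), and 0 otherwise (the tensor product of one-qudit increment gates ⊕ b_k), and let T' be defined likewise from −b (so T' = T⁻¹). Let ⊕(b ℓ) be the d × d matrix with entry 1 at positions (j + b ℓ, j) and 0 elsewhere, and ⊖(b ℓ) its inverse. Define the shifted control word w̃ by w̃ i = Option.map (fun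 v => v + b i) (w i). Then T * Λ(ℓ,w,V) * T' = Λ(ℓ, w̃, ⊕(b ℓ) * V * ⊖(b ℓ)). -/
/-- The tensor product of one-qudit modular-increment gates `⊕ bₖ`. -/
def shiftGate (d n : ℕ) (b : Fin n → Fin d) :
    Matrix (Fin n → Fin d) (Fin n → Fin d) ℂ :=
  Matrix.of fun x y => if ∀ k, x k = y k + b k then 1 else 0

/-- The one-qudit modular increment `⊕ a`, with entry 1 at positions `(j+a, j)`. -/
def incMat (d : ℕ) (a : Fin d) : Matrix (Fin d) (Fin d) ℂ :=
  Matrix.of fun i j => if i = j + a then 1 else 0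

theorem PEquiv.toMatrix_subRight_mul_mul_toMatrix_subRight_neg {G α : Type*} [AddGroup G]
    [Fintype G] [DecidableEq G] [NonAssocSemiring α] (M : Matrix G G α) (a : G) :
    (Equiv.subRight a).toPEquiv.toMatrix * M * (Equiv.subRight (-a)).toPEquiv.toMatrix =
      M.submatrix (· - a) (· - a) := by
  rw [PEquiv.toMatrix_toPEquiv_mul, PEquiv.mul_toMatrix_toPEquiv, Matrix.submatrix_submatrix]
  ext x y
  simp [sub_eq_add_neg]

section

variable {d n : ℕ} [NeZero d]

theorem shiftGate_eq_toMatrix (b : Fin n → Fin d) :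
    shiftGate d n b = (Equiv.subRight b).toPEquiv.toMatrix := by
  ext x y
  simp [shiftGate, funext_iff, eq_sub_iff_add_eq, eq_comm]

theorem incMat_eq_toMatrix (a : Fin d) :
    incMat d a = (Equiv.subRight a).toPEquiv.toMatrix := by
  ext i j
  simp [incMat, eq_sub_iff_add_eq, eq_comm]

theorem ctrlGate_submatrix_sub (ℓ : Fin n) (w : Fin n → Option (Fin d))
    (V : Matrix (Fin d) (Fin d) ℂ) (b : Fin n → Fin d) :
    (ctrlGate d n ℓ w V).submatrix (· - b) (· - b) =
      ctrlGate d n ℓ (fun i => (w i).map (· + b i)) (V.submatrix (· - b ℓ) (· - b ℓ)) := by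
  have hcontrols (x : Fin n → Fin d) : (∀ i v, w i = some v → x i - b i = v) ↔
      ∀ i v, (w i).map (· + b i) = some v → x i = v := by
    simp [sub_eq_iff_eq_add]
  ext y x
  simp [ctrlGate, hcontrols]

end

theorem flip_plus_general (d n : ℕ) (hd : 2 ≤ d)
    (ℓ : Fin n) (w : Fin n → Option (Fin d))
    (V : Matrix (Fin d) (Fin d) ℂ) (b : Fin n → Fin d) :
    shiftGate d n b * ctrlGate d n ℓ w V * shiftGate d n (fun k => -(b k)) =
      ctrlGate d n ℓ (fun i => Option.map (fun v => v + b i) (w i))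
        (incMat d (b ℓ) * V * incMat d (-(b ℓ))) := by
  have : NeZero d := ⟨by omega⟩
  have hneg : (fun k => -(b k)) = -b := rfl
  rw [hneg, shiftGate_eq_toMatrix, shiftGate_eq_toMatrix, incMat_eq_toMatrix, incMat_eq_toMatrix,
    PEquiv.toMatrix_subRight_mul_mul_toMatrix_subRight_neg,
    PEquiv.toMatrix_subRight_mul_mul_toMatrix_subRight_neg, ctrlGate_submatrix_sub]

/-- The similarity relation (eq:flip_plus): conjugating a controlled one-qudit
gate by local increments shifts the control word and conjugates the target
operation. -/
theorem flip_plus (d n : ℕ) (hd : 2 ≤ d) (hn : 2 ≤ n)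
    (ℓ : Fin n) (w : Fin n → Option (Fin d)) (hwℓ : w ℓ = none)
    (V : Matrix (Fin d) (Fin d) ℂ) (b : Fin n → Fin d) :
    shiftGate d n b * ctrlGate d n ℓ w V * shiftGate d n (fun k => -(b k)) =
      ctrlGate d n ℓ (fun i => Option.map (fun v => v + b i) (w i))
        (incMat d (b ℓ) * V * incMat d (-(b ℓ))) :=
  flip_plus_general d n hd ℓ w V b
end

section
/- For every integer d ≥ 2 there exists a constant C > 0 such that for every n ≥ 2 and every function θ : (Fin n → Fin d) → ℝ, the diagonal unitary matrix D with D x x = exp(i · θ x) and D x y = 0 for x ≠ y can be written as a product of at most C · n · d^n two-qudit gates. -/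
namespace DPC

open Finset

noncomputable section

/-! ### The character `E` -/

/-- `E d k = exp(2πik/d)`. -/
def E (d : ℕ) (k : ℕ) : ℂ := Complex.exp (2 * Real.pi * Complex.I * ((k : ℂ) / (d : ℂ)))

lemma E_zero (d : ℕ) : E d 0 = 1 := by simp [E]

lemma E_add (d a b : ℕ) : E d (a + b) = E d a * E d b := by
  rw [E, E, E, ← Complex.exp_add]
  congr 1
  push_cast
  ring

lemma E_d (d : ℕ) (hd : d ≠ 0) : E d d = 1 := by
  rw [E, div_self (by exact_mod_cast hd)]
  simpa using Complex.exp_two_pi_mul_I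

lemma E_pow (d a b : ℕ) : E d (a * b) = (E d b) ^ a := by
  induction a with
  | zero => simp [E_zero]
  | succ a ih => rw [Nat.succ_mul, E_add, ih, pow_succ]

lemma E_mul_d (d k : ℕ) (hd : d ≠ 0) : E d (k * d) = 1 := by
  rw [E_pow, E_d d hd, one_pow]

lemma E_mod (d k : ℕ) (hd : d ≠ 0) : E d (k % d) = E d k := by
  conv_rhs => rw [← Nat.mod_add_div k d]
  rw [E_add, mul_comm d (k / d), E_mul_d _ _ hd, mul_one]

lemma E_congr (d a b : ℕ) (hd : d ≠ 0) (h : a ≡ b [MOD d]) : E d a = E d b := by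
  rw [← E_mod d a hd, ← E_mod d b hd, h]

lemma E_ne_one (d k : ℕ) (h0 : 0 < k) (hk : k < d) : E d k ≠ 1 := by
  intro h
  rw [E, Complex.exp_eq_one_iff] at h
  obtain ⟨z, hz⟩ := h
  have hd0 : (d : ℂ) ≠ 0 := by
    have : 0 < d := lt_trans h0 hk
    exact_mod_cast this.ne'
  have h2 : (2 * (Real.pi : ℂ) * Complex.I) ≠ 0 := by
    simp [Real.pi_ne_zero, Complex.I_ne_zero]
  have h3 : (2 * (Real.pi : ℂ) * Complex.I) * (k : ℂ)
      = (2 * (Real.pi : ℂ) * Complex.I) * ((z : ℂ) * (d : ℂ)) := by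
    field_simp at hz
    linear_combination (2 * (Real.pi : ℂ) * Complex.I) * hz
  have hzd : (k : ℂ) = (z : ℂ) * (d : ℂ) := mul_left_cancel₀ h2 h3
  have hzz : (k : ℤ) = z * d := by exact_mod_cast hzd
  have hdz : (0:ℤ) < d := by exact_mod_cast lt_trans h0 hk
  have hk0 : (0:ℤ) < (k:ℤ) := by exact_mod_cast h0
  have hkd : (k:ℤ) < (d:ℤ) := by exact_mod_cast hk
  rcases lt_trichotomy z 0 with hneg | hzero | hpos
  · have : z ≤ -1 := by omega
    nlinarith
  · rw [hzero] at hzz; simp at hzz; omega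
  · have : (1:ℤ) ≤ z := hpos
    nlinarith

section

variable {d : ℕ} [NeZero d]

lemma sum_char (hd : 2 ≤ d) (a : Fin d) :
    ∑ t : Fin d, E d (a.val * t.val) = if a = 0 then (d : ℂ) else 0 := by
  have hterm : ∀ t : Fin d, E d (a.val * t.val) = (E d a.val) ^ t.val := by
    intro t; rw [mul_comm, E_pow]
  by_cases ha : a = 0
  · subst ha
    simp only [if_pos rfl]
    have h1 : ∀ t : Fin d, E d ((0 : Fin d).val * t.val) = 1 := by
      intro t; simp [E_zero]
    rw [Finset.sum_congr rfl (fun t _ => h1 t)]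
    simp
  · simp only [if_neg ha]
    have hv : 0 < a.val := by
      rcases Nat.eq_zero_or_pos a.val with h | h
      · exact absurd (Fin.ext h) ha
      · exact h
    have hne : E d a.val ≠ 1 := E_ne_one d a.val hv a.isLt
    calc ∑ t : Fin d, E d (a.val * t.val) = ∑ t : Fin d, (E d a.val) ^ (t : ℕ) :=
          Finset.sum_congr rfl (fun t _ => hterm t)
      _ = ∑ i ∈ Finset.range d, (E d a.val) ^ i := Fin.sum_univ_eq_sum_range _ d
      _ = ((E d a.val) ^ d - 1) / (E d a.val - 1) := geom_sum_eq hne d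
      _ = 0 := by
          rw [← E_pow, mul_comm, E_mul_d d _ (by omega)]
          simp

/-! ### Characters of `(Fin d)^n` -/

/-- The additive character of `(Fin d)^n` with frequency `w`. -/
def ch (d : ℕ) (n : ℕ) (w x : Fin n → Fin d) : ℂ := ∏ i, E d ((w i).val * (x i).val)

lemma E_val_add (hd : 2 ≤ d) (a b c : Fin d) :
    E d (a.val * (b + c).val) = E d (a.val * b.val) * E d (a.val * c.val) := by
  rw [← E_add, ← Nat.left_distrib]
  have h1 : (b + c).val ≡ b.val + c.val [MOD d] := by
    rw [Fin.val_add]; exact Nat.mod_modEq _ d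
  exact E_congr d _ _ (by omega) (Nat.ModEq.mul_left a.val h1)

lemma E_val_sum (hd : 2 ≤ d) {ι : Type*} (a : Fin d) (s : Finset ι) (g : ι → Fin d) :
    E d (a.val * (∑ k ∈ s, g k).val) = ∏ k ∈ s, E d (a.val * (g k).val) := by
  classical
  induction s using Finset.induction_on with
  | empty => simp [E_zero]
  | insert _ _ hx ih =>
    rw [Finset.sum_insert hx, E_val_add hd, ih, Finset.prod_insert hx]

lemma ch_add {n : ℕ} (hd : 2 ≤ d) (w x y : Fin n → Fin d) :
    ch d n w (x + y) = ch d n w x * ch d n w y := by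
  rw [ch, ch, ch, ← Finset.prod_mul_distrib]
  exact Finset.prod_congr rfl fun i _ => by
    simpa using E_val_add hd (w i) (x i) (y i)

lemma sum_ch {n : ℕ} (hd : 2 ≤ d) (u : Fin n → Fin d) :
    ∑ w : Fin n → Fin d, ch d n w u = if u = 0 then ((d : ℂ)) ^ n else 0 := by
  classical
  have hps := Finset.prod_univ_sum (fun _ : Fin n => (Finset.univ : Finset (Fin d)))
    (fun i c => E d (c.val * (u i).val))
  rw [Fintype.piFinset_univ] at hps
  rw [show (∑ w : Fin n → Fin d, ch d n w u)
      = ∑ w : Fin n → Fin d, ∏ i, E d ((w i).val * (u i).val) from rfl, ← hps]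
  have h1 : ∀ i : Fin n, ∑ c : Fin d, E d (c.val * (u i).val) = if u i = 0 then (d : ℂ) else 0 := by
    intro i
    rw [Finset.sum_congr rfl (fun c _ => by rw [mul_comm ((c : Fin d).val)])]
    exact sum_char hd (u i)
  rw [Finset.prod_congr rfl (fun i _ => h1 i)]
  by_cases hu : u = 0
  · subst hu
    simp only [if_pos rfl, Pi.zero_apply]
    simp
  · simp only [if_neg hu]
    obtain ⟨i0, hi0⟩ := Function.ne_iff.mp hu
    have hi0' : u i0 ≠ 0 := by simpa using hi0
    exact Finset.prod_eq_zero (Finset.mem_univ i0) (by simp [hi0'])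

end

end

/-! ### Gadget functions -/

/-- The accumulator value. -/
def acc (d n : ℕ) [NeZero d] (j m : Fin n) (f : Fin n → Fin d → Fin d)
    (x : Fin n → Fin d) : Fin d :=
  x m + ∑ k ∈ (Finset.univ.erase j).erase m, f k (x k)

/-- A gadget function. -/
def gfun (d n : ℕ) [NeZero d] (j m : Fin n) (f : Fin n → Fin d → Fin d)
    (H : Fin d → Fin d → ℂ) : (Fin n → Fin d) → ℂ := fun x => H (x j) (acc d n j m f x)

/-- The set of gadget functions. -/
def Gad (d n : ℕ) [NeZero d] : Set ((Fin n → Fin d) → ℂ) :=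
  { g | ∃ j m f H, j ≠ m ∧ g = gfun d n j m f H }

section
variable {d n : ℕ} [NeZero d]

lemma gfun_translate (j m : Fin n) (f : Fin n → Fin d → Fin d) (H : Fin d → Fin d → ℂ)
    (t : Fin n → Fin d) :
    (fun x => gfun d n j m f H (x + t))
      = gfun d n j m (fun k s => f k (s + t k)) (fun p q => H (p + t j) (q + t m)) := by
  funext x
  simp only [gfun, acc, Pi.add_apply]
  congr 1
  rw [add_right_comm]

lemma translate_mem_Gad {g : (Fin n → Fin d) → ℂ} (hg : g ∈ Gad d n) (t : Fin n → Fin d) :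
    (fun x => g (x + t)) ∈ Gad d n := by
  obtain ⟨j, m, f, H, hjm, rfl⟩ := hg
  rw [gfun_translate]
  exact ⟨j, m, _, _, hjm, rfl⟩

theorem mem_span_Gad (hd : 2 ≤ d) (hn : 2 ≤ n) (f0 : (Fin n → Fin d) → ℂ) :
    f0 ∈ Submodule.span ℂ (Gad d n) := by
  classical
  have hdC : ((d : ℂ)) ≠ 0 := by
    exact_mod_cast (by omega : d ≠ 0)
  set j1 : Fin n := ⟨0, by omega⟩ with hj1
  set m1 : Fin n := ⟨1, by omega⟩ with hm1
  have hj1m1 : j1 ≠ m1 := by simp [hj1, hm1, Fin.ext_iff]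
  -- every character is in the span
  have hchar : ∀ w : Fin n → Fin d, (fun x => ch d n w x) ∈ Submodule.span ℂ (Gad d n) := by
    intro w
    by_cases hw : w = 0
    · subst hw
      have h1 : (fun x : Fin n → Fin d => ch d n 0 x)
          = gfun d n j1 m1 (fun _ _ => 0) (fun _ _ => 1) := by
        funext x
        simp [ch, gfun, E_zero]
      rw [h1]
      exact Submodule.subset_span ⟨j1, m1, _, _, hj1m1, rfl⟩
    · obtain ⟨m0, hm0⟩ := Function.ne_iff.mp hw
      have hm0' : w m0 ≠ 0 := by simpa using hm0
      have hm0v : 0 < (w m0).val := by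
        rcases Nat.eq_zero_or_pos (w m0).val with h | h
        · exfalso; apply hm0'; apply Fin.ext; simpa using h
        · exact h
      set j0 : Fin n := if m0 = j1 then m1 else j1 with hj0
      have hjm : j0 ≠ m0 := by
        by_cases h : m0 = j1
        · rw [hj0, if_pos h, h]
          exact Ne.symm hj1m1
        · rw [hj0, if_neg h]
          exact fun hc => h hc.symm
      have hmj : m0 ≠ j0 := Ne.symm hjm
      set fk : Fin n → Fin d → Fin d :=
        fun k t => if w k = 0 then 0 else (if t = 0 then 1 else 0) with hfk
      set H : Fin d → Fin d → ℂ :=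
        fun p q => E d ((w j0).val * p.val) * E d ((w m0).val * q.val) with hH
      set g : (Fin n → Fin d) → ℂ := gfun d n j0 m0 fk H with hg
      set K : Finset (Fin n) := (Finset.univ.erase j0).erase m0 with hK
      set v : Fin n → Fin d → ℂ := fun i t =>
        if i = j0 then E d ((w j0).val * t.val)
        else if i = m0 then E d ((w m0).val * t.val)
        else E d ((w m0).val * (fk i t).val) with hv
      have hvj : ∀ t, v j0 t = E d ((w j0).val * t.val) := by
        intro t; simp [hv]
      have hvm : ∀ t, v m0 t = E d ((w m0).val * t.val) := by
        intro t; simp [hv, hmj]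
      have hgs : ∀ s, g s = ∏ i, v i (s i) := by
        intro s
        have h2 : ∏ i, v i (s i) = v j0 (s j0) * (v m0 (s m0) * ∏ k ∈ K, v k (s k)) := by
          rw [← Finset.mul_prod_erase Finset.univ _ (Finset.mem_univ j0)]
          congr 1
          rw [← Finset.mul_prod_erase _ _
            (Finset.mem_erase.mpr ⟨hmj, Finset.mem_univ m0⟩)]
        have hvk : ∀ k ∈ K, v k (s k) = E d ((w m0).val * (fk k (s k)).val) := by
          intro k hk
          obtain ⟨hk1, hk2⟩ := Finset.mem_erase.mp hk
          obtain ⟨hk3, _⟩ := Finset.mem_erase.mp hk2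
          simp only [hv]
          rw [if_neg hk3, if_neg hk1]
        rw [h2, hvj, hvm, Finset.prod_congr rfl hvk]
        show H (s j0) (acc d n j0 m0 fk s) = _
        rw [hH]
        show E d ((w j0).val * (s j0).val) * E d ((w m0).val * (acc d n j0 m0 fk s).val) = _
        congr 1
        rw [acc, E_val_add hd, E_val_sum hd]
      set c : ℂ := ∑ s : Fin n → Fin d, ch d n w (-s) * g s with hc
      have hT : ∀ x, (∑ t : Fin n → Fin d, ch d n w (-t) * g (x + t)) = ch d n w x * c := by
        intro x
        have step1 : (∑ t : Fin n → Fin d, ch d n w (-t) * g (x + t))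
            = ∑ s : Fin n → Fin d, ch d n w (x - s) * g s := by
          apply Fintype.sum_equiv (Equiv.addLeft x)
          intro t
          have hxt : x - (x + t) = -t := by abel
          rw [show (Equiv.addLeft x) t = x + t from rfl, hxt]
        rw [step1]
        have step2 : ∀ s : Fin n → Fin d,
            ch d n w (x - s) * g s = ch d n w x * (ch d n w (-s) * g s) := by
          intro s
          rw [sub_eq_add_neg, ch_add hd, mul_assoc]
        rw [Finset.sum_congr rfl (fun s _ => step2 s), ← Finset.mul_sum]
      have hcval : c = ∏ i, (∑ t : Fin d, E d ((w i).val * ((-t : Fin d)).val) * v i t) := by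
        rw [hc]
        have h3 : ∀ s : Fin n → Fin d,
            ch d n w (-s) * g s = ∏ i, (E d ((w i).val * ((-(s i) : Fin d)).val) * v i (s i)) := by
          intro s
          rw [hgs s, ch, ← Finset.prod_mul_distrib]
          exact Finset.prod_congr rfl fun i _ => by rw [Pi.neg_apply]
        rw [Finset.sum_congr rfl (fun s _ => h3 s)]
        have h4 := Finset.prod_univ_sum (fun _ : Fin n => (Finset.univ : Finset (Fin d)))
          (fun i t => E d ((w i).val * ((-t : Fin d)).val) * v i t)
        rw [Fintype.piFinset_univ] at h4
        rw [← h4]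
      have hdiag : ∀ a : Fin d, ∀ t : Fin d,
          E d (a.val * ((-t : Fin d)).val) * E d (a.val * t.val) = 1 := by
        intro a t
        rw [← E_add, ← Nat.left_distrib]
        have hmod : (-t : Fin d).val + t.val ≡ 0 [MOD d] := by
          show ((-t : Fin d).val + t.val) % d = 0 % d
          rw [← Fin.val_add, neg_add_cancel]
          simp
        rw [E_congr d _ _ (by omega) (Nat.ModEq.mul_left a.val hmod)]
        simp [E_zero]
      have hfac : ∀ i, (∑ t : Fin d, E d ((w i).val * ((-t : Fin d)).val) * v i t) ≠ 0 := by
        intro i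
        by_cases hij : i = j0
        · rw [hij]
          have h8 : ∀ t : Fin d, E d ((w j0).val * ((-t : Fin d)).val) * v j0 t = 1 := by
            intro t; rw [hvj]; exact hdiag (w j0) t
          rw [Finset.sum_congr rfl (fun t _ => h8 t)]
          simpa using hdC
        · by_cases him : i = m0
          · rw [him]
            have h8 : ∀ t : Fin d, E d ((w m0).val * ((-t : Fin d)).val) * v m0 t = 1 := by
              intro t; rw [hvm]; exact hdiag (w m0) t
            rw [Finset.sum_congr rfl (fun t _ => h8 t)]
            simpa using hdC
          · have hvi : ∀ t : Fin d, v i t = E d ((w m0).val * (fk i t).val) := by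
              intro t; simp only [hv]; rw [if_neg hij, if_neg him]
            by_cases hwi : w i = 0
            · have h8 : ∀ t : Fin d, E d ((w i).val * ((-t : Fin d)).val) * v i t = 1 := by
                intro t
                rw [hvi t]
                simp [hfk, hwi, E_zero]
              rw [Finset.sum_congr rfl (fun t _ => h8 t)]
              simpa using hdC
            · -- spike case
              have hre : (∑ t : Fin d, E d ((w i).val * ((-t : Fin d)).val) * v i t)
                  = ∑ r : Fin d, E d ((w i).val * r.val)
                      * E d ((w m0).val * ((if r = 0 then 1 else 0 : Fin d)).val) := by
                apply Fintype.sum_equiv (Equiv.neg (Fin d))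
                intro t
                rw [hvi t]
                rw [show (Equiv.neg (Fin d)) t = -t from rfl]
                congr 2
                simp only [hfk, hwi, if_false]
                congr 1
                simp [neg_eq_zero]
              rw [hre]
              have hone : ((1 : Fin d)).val = 1 := by
                rw [Fin.val_one']
                exact Nat.mod_eq_of_lt (by omega)
              have hterm : ∀ r : Fin d,
                  E d ((w i).val * r.val)
                      * E d ((w m0).val * ((if r = 0 then 1 else 0 : Fin d)).val)
                  = E d ((w i).val * r.val)
                    + (if r = 0 then E d ((w m0).val) - 1 else 0) := by
                intro r
                by_cases hr : r = 0
                · rw [if_pos hr, if_pos hr, hone, hr]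
                  simp only [Fin.val_zero, Nat.mul_zero, E_zero, one_mul, Nat.mul_one]
                  ring
                · rw [if_neg hr, if_neg hr]
                  simp [E_zero]
              rw [Finset.sum_congr rfl (fun r _ => hterm r), Finset.sum_add_distrib]
              rw [sum_char hd (w i), if_neg hwi, Finset.sum_ite_eq' Finset.univ (0 : Fin d)]
              simp only [Finset.mem_univ, if_pos, zero_add]
              intro hcon
              exact E_ne_one d ((w m0).val) hm0v (w m0).isLt (sub_eq_zero.mp hcon)
      have hc0 : c ≠ 0 := by
        rw [hcval]
        exact Finset.prod_ne_zero_iff.mpr fun i _ => hfac i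
      have hmemT : (fun x => ch d n w x * c) ∈ Submodule.span ℂ (Gad d n) := by
        have heq : (fun x => ch d n w x * c)
            = ∑ t : Fin n → Fin d, ch d n w (-t) • (fun x => g (x + t)) := by
          funext x
          rw [Finset.sum_apply]
          simp only [Pi.smul_apply, smul_eq_mul]
          exact (hT x).symm
        rw [heq]
        refine Submodule.sum_mem _ fun t _ => Submodule.smul_mem _ _ ?_
        refine Submodule.subset_span (translate_mem_Gad ?_ t)
        exact ⟨j0, m0, fk, H, hjm, rfl⟩
      have hfin : (fun x => ch d n w x) = c⁻¹ • (fun x => ch d n w x * c) := by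
        funext x
        simp only [Pi.smul_apply, smul_eq_mul]
        field_simp
      rw [hfin]
      exact Submodule.smul_mem _ _ hmemT
  -- expand f0 over characters
  set D : ℂ := ((d : ℂ)) ^ n with hD
  have hD0 : D ≠ 0 := pow_ne_zero _ hdC
  have hexp : f0 = ∑ w : Fin n → Fin d,
      (D⁻¹ * ∑ u, f0 u * ch d n w (-u)) • (fun x => ch d n w x) := by
    funext x
    rw [Finset.sum_apply]
    simp only [Pi.smul_apply, smul_eq_mul]
    have h5 : ∀ w : Fin n → Fin d,
        (D⁻¹ * ∑ u, f0 u * ch d n w (-u)) * ch d n w x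
          = D⁻¹ * ∑ u, f0 u * ch d n w (x - u) := by
      intro w
      have h5a : ∀ u, f0 u * ch d n w (x - u) = (f0 u * ch d n w (-u)) * ch d n w x := by
        intro u
        rw [sub_eq_add_neg, ch_add hd]
        ring
      rw [Finset.sum_congr rfl (fun u _ => h5a u), ← Finset.sum_mul]
      ring
    rw [Finset.sum_congr rfl (fun w _ => h5 w), ← Finset.mul_sum, Finset.sum_comm]
    have h6 : ∀ u, (∑ w : Fin n → Fin d, f0 u * ch d n w (x - u))
        = f0 u * (if x - u = 0 then D else 0) := by
      intro u
      rw [← Finset.mul_sum, sum_ch hd]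
    rw [Finset.sum_congr rfl (fun u _ => h6 u)]
    have h7 : ∀ u : Fin n → Fin d, f0 u * (if x - u = 0 then D else 0)
        = if u = x then f0 u * D else 0 := by
      intro u
      by_cases h : u = x
      · rw [if_pos h, h]
        simp
      · rw [if_neg h, if_neg (fun hc => h (sub_eq_zero.mp hc).symm), mul_zero]
    rw [Finset.sum_congr rfl (fun u _ => h7 u), Finset.sum_ite_eq' Finset.univ x]
    simp only [Finset.mem_univ, if_pos]
    rw [mul_comm (f0 x) D, ← mul_assoc, inv_mul_cancel₀ hD0, one_mul]
  rw [hexp]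
  exact Submodule.sum_mem _ fun w _ => Submodule.smul_mem _ _ (hchar w)

end

/-! ### The matrices -/

noncomputable section
variable (d n : ℕ) [NeZero d]

/-- Diagonal phase matrix. -/
def Dph (φ : (Fin n → Fin d) → ℝ) : Matrix (Fin n → Fin d) (Fin n → Fin d) ℂ :=
  Matrix.diagonal fun x => Complex.exp (Complex.I * φ x)

/-- Permutation matrix. -/
def pm (e : Equiv.Perm (Fin n → Fin d)) : Matrix (Fin n → Fin d) (Fin n → Fin d) ℂ :=
  Matrix.of fun x y => if x = e y then 1 else 0

variable {d n}

lemma Dph_zero : Dph d n 0 = 1 := by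
  unfold Dph
  simp

lemma Dph_add (φ ψ : (Fin n → Fin d) → ℝ) : Dph d n (φ + ψ) = Dph d n φ * Dph d n ψ := by
  unfold Dph
  rw [Matrix.diagonal_mul_diagonal]
  have hfun : (fun x => Complex.exp (Complex.I * ((φ + ψ) x : ℝ)))
      = fun i => Complex.exp (Complex.I * (φ i : ℝ)) * Complex.exp (Complex.I * (ψ i : ℝ)) := by
    funext x
    rw [← Complex.exp_add]
    congr 1
    rw [Pi.add_apply]
    push_cast
    ring
  rw [hfun]

lemma expI_mul_star (r : ℝ) :
    Complex.exp (Complex.I * r) * star (Complex.exp (Complex.I * r)) = 1 := by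
  have h1 : star (Complex.exp (Complex.I * r)) = Complex.exp (-(Complex.I * r)) := by
    rw [show star (Complex.exp (Complex.I * r))
        = (starRingEnd ℂ) (Complex.exp (Complex.I * r)) from rfl]
    rw [← Complex.exp_conj]
    congr 1
    rw [map_mul, Complex.conj_I, Complex.conj_ofReal]
    ring
  rw [h1, ← Complex.exp_add]
  simp

lemma Dph_unitary (φ : (Fin n → Fin d) → ℝ) :
    Dph d n φ ∈ Matrix.unitaryGroup (Fin n → Fin d) ℂ := by
  rw [Matrix.mem_unitaryGroup_iff]
  unfold Dph
  rw [Matrix.star_eq_conjTranspose, Matrix.diagonal_conjTranspose, Matrix.diagonal_mul_diagonal]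
  ext i j
  rw [Matrix.diagonal_apply, Matrix.one_apply]
  by_cases h : i = j
  · rw [if_pos h, if_pos h, Pi.star_apply]
    exact expI_mul_star (φ i)
  · rw [if_neg h, if_neg h]

lemma Dph_list_sum (l : List ((Fin n → Fin d) → ℝ)) :
    Dph d n l.sum = (l.map (Dph d n)).prod := by
  induction l with
  | nil => simpa using Dph_zero
  | cons φ l ih => rw [List.sum_cons, Dph_add, ih, List.map_cons, List.prod_cons]

lemma pm_mul (e f : Equiv.Perm (Fin n → Fin d)) :
    pm d n e * pm d n f = pm d n (f.trans e) := by
  ext x y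
  rw [Matrix.mul_apply]
  show (∑ z, (if x = e z then (1:ℂ) else 0) * (if z = f y then 1 else 0)) = _
  rw [Finset.sum_eq_single (f y)]
  · rw [if_pos rfl, mul_one]
    rfl
  · intro z _ hz
    rw [if_neg hz, mul_zero]
  · intro h
    exact absurd (Finset.mem_univ _) h

lemma pm_one : pm d n (Equiv.refl (Fin n → Fin d)) = 1 := by
  ext x y
  rw [Matrix.one_apply]
  rfl

lemma pm_unitary (e : Equiv.Perm (Fin n → Fin d)) :
    pm d n e ∈ Matrix.unitaryGroup (Fin n → Fin d) ℂ := by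
  rw [Matrix.mem_unitaryGroup_iff]
  ext x y
  rw [Matrix.mul_apply, Matrix.one_apply]
  have hterm : ∀ z, pm d n e x z * (star (pm d n e)) z y
      = (if x = e z then (1:ℂ) else 0) * (if y = e z then 1 else 0) := by
    intro z
    rw [Matrix.star_apply]
    show _ = _ * (if y = e z then (1:ℂ) else 0)
    congr 1
    show star (if y = e z then (1:ℂ) else 0) = _
    split <;> simp
  rw [Finset.sum_congr rfl (fun z _ => hterm z)]
  by_cases hxy : x = y
  · rw [if_pos hxy, ← hxy]
    rw [Finset.sum_eq_single (e.symm x)]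
    · simp
    · intro z _ hz
      have hne : x ≠ e z := fun hc => hz (by rw [hc]; simp)
      rw [if_neg hne, zero_mul]
    · intro h
      exact absurd (Finset.mem_univ _) h
  · rw [if_neg hxy]
    apply Finset.sum_eq_zero
    intro z _
    by_cases h1 : x = e z
    · have h2 : y ≠ e z := fun hc => hxy (h1.trans hc.symm)
      rw [if_neg h2, mul_zero]
    · rw [if_neg h1, zero_mul]

lemma pm_mul_apply (e : Equiv.Perm (Fin n → Fin d)) (M : Matrix (Fin n → Fin d) (Fin n → Fin d) ℂ)
    (x y : Fin n → Fin d) : (pm d n e * M) x y = M (e.symm x) y := by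
  rw [Matrix.mul_apply]
  show (∑ z, (if x = e z then (1:ℂ) else 0) * M z y) = _
  rw [Finset.sum_eq_single (e.symm x)]
  · rw [if_pos (by simp), one_mul]
  · intro z _ hz
    have hne : x ≠ e z := fun hc => hz (by rw [hc]; simp)
    rw [if_neg hne, zero_mul]
  · intro h
    exact absurd (Finset.mem_univ _) h

lemma mul_pm_apply (M : Matrix (Fin n → Fin d) (Fin n → Fin d) ℂ) (e : Equiv.Perm (Fin n → Fin d))
    (x y : Fin n → Fin d) : (M * pm d n e) x y = M x (e y) := by
  rw [Matrix.mul_apply]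
  show (∑ z, M x z * (if z = e y then (1:ℂ) else 0)) = _
  rw [Finset.sum_eq_single (e y)]
  · rw [if_pos rfl, mul_one]
  · intro z _ hz
    rw [if_neg hz, mul_zero]
  · intro h
    exact absurd (Finset.mem_univ _) h

lemma pm_conj (e : Equiv.Perm (Fin n → Fin d)) (φ : (Fin n → Fin d) → ℝ) :
    pm d n e.symm * (Dph d n φ * pm d n e) = Dph d n (fun x => φ (e x)) := by
  ext x y
  rw [pm_mul_apply, mul_pm_apply, Equiv.symm_symm]
  show Matrix.diagonal _ (e x) (e y) = Matrix.diagonal _ x y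
  rw [Matrix.diagonal_apply, Matrix.diagonal_apply]
  by_cases h : x = y
  · rw [if_pos h, if_pos (by rw [h])]
  · rw [if_neg h, if_neg (fun hc => h (e.injective hc))]

/-- The controlled-addition permutation: adds `f` of qudit `k` onto qudit `m`. -/
def addPerm (d n : ℕ) [NeZero d] (m k : Fin n) (f : Fin d → Fin d) :
    Equiv.Perm (Fin n → Fin d) :=
  if h : m = k then Equiv.refl _ else
  { toFun := fun x => Function.update x m (x m + f (x k))
    invFun := fun y => Function.update y m (y m - f (y k))
    left_inv := by
      intro x
      have hkm : k ≠ m := fun hc => h hc.symm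
      dsimp only
      rw [Function.update_idem, Function.update_of_ne hkm, Function.update_self,
        add_sub_cancel_right, Function.update_eq_self]
    right_inv := by
      intro y
      have hkm : k ≠ m := fun hc => h hc.symm
      dsimp only
      rw [Function.update_idem, Function.update_of_ne hkm, Function.update_self,
        sub_add_cancel, Function.update_eq_self] }

lemma addPerm_apply (m k : Fin n) (hmk : m ≠ k) (f : Fin d → Fin d) (x : Fin n → Fin d) :
    addPerm d n m k f x = Function.update x m (x m + f (x k)) := by
  rw [addPerm, dif_neg hmk]
  rfl

lemma addPerm_symm (m k : Fin n) (f : Fin d → Fin d) :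
    (addPerm d n m k f).symm = addPerm d n m k (fun t => -(f t)) := by
  by_cases h : m = k
  · rw [addPerm, addPerm, dif_pos h, dif_pos h]
    rfl
  · apply Equiv.ext
    intro y
    rw [addPerm_apply m k h, show (addPerm d n m k f).symm y
        = Function.update y m (y m - f (y k)) from by rw [addPerm, dif_neg h]; rfl]
    rw [sub_eq_add_neg]

lemma addPerm_gate (m k : Fin n) (hmk : m ≠ k) (f : Fin d → Fin d) :
    IsTwoQuditGateOn d n m k (pm d n (addPerm d n m k f)) := by
  refine ⟨pm_unitary _, Matrix.of fun pq pq' =>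
    if pq.1 = pq'.1 + f pq'.2 ∧ pq.2 = pq'.2 then 1 else 0, ?_⟩
  intro x y
  constructor
  · intro hxy
    show (if x = addPerm d n m k f y then (1:ℂ) else 0) = _
    have hiff : (x = addPerm d n m k f y) ↔ (x m = y m + f (y k) ∧ x k = y k) := by
      rw [addPerm_apply m k hmk]
      constructor
      · intro h
        refine ⟨?_, ?_⟩
        · rw [h, Function.update_self]
        · rw [h, Function.update_of_ne (Ne.symm hmk)]
      · rintro ⟨h1, h2⟩
        funext i
        by_cases him : i = m
        · rw [him, Function.update_self, ← h1]
        · rw [Function.update_of_ne him]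
          by_cases hik : i = k
          · rw [hik, ← h2]
          · exact hxy i him hik
    show _ = if ((x m, x k).1 = ((y m, y k)).1 + f ((y m, y k)).2 ∧ (x m, x k).2 = ((y m, y k)).2)
        then (1:ℂ) else 0
    exact if_congr hiff rfl rfl
  · intro hxy
    obtain ⟨i, hi⟩ := not_forall.mp hxy
    push_neg at hi
    obtain ⟨him, hik, hineq⟩ := hi
    show (if x = addPerm d n m k f y then (1:ℂ) else 0) = 0
    rw [if_neg]
    intro hc
    apply hineq
    rw [hc, addPerm_apply m k hmk, Function.update_of_ne him]

lemma phase_gate (j m : Fin n) (hjm : j ≠ m) (h : Fin d → Fin d → ℝ) :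
    IsTwoQuditGateOn d n j m (Dph d n (fun x => h (x j) (x m))) := by
  refine ⟨Dph_unitary _, Matrix.of fun pq pq' =>
    if pq = pq' then Complex.exp (Complex.I * h pq.1 pq.2) else 0, ?_⟩
  intro x y
  constructor
  · intro hxy
    show Matrix.diagonal _ x y = _
    rw [Matrix.diagonal_apply]
    have hiff : (x = y) ↔ ((x j, x m) = (y j, y m)) := by
      constructor
      · intro h1; rw [h1]
      · intro h1
        obtain ⟨h2, h3⟩ := Prod.mk.injEq .. ▸ h1
        funext i
        by_cases hij : i = j
        · rw [hij]; exact h2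
        · by_cases him : i = m
          · rw [him]; exact h3
          · exact hxy i hij him
    exact if_congr hiff rfl rfl
  · intro hxy
    obtain ⟨i, hi⟩ := not_forall.mp hxy
    push_neg at hi
    obtain ⟨hij, him, hineq⟩ := hi
    show Matrix.diagonal _ x y = 0
    exact Matrix.diagonal_apply_ne _ (fun hc => hineq (by rw [hc]))

lemma foldr_addPerm_apply (m : Fin n) (f : Fin n → Fin d → Fin d) (l : List (Fin n))
    (hl : ∀ k ∈ l, k ≠ m) (x : Fin n → Fin d) :
    (l.foldr (fun k e => (addPerm d n m k (f k)).trans e) (Equiv.refl _)) x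
      = Function.update x m (x m + (l.map (fun k => f k (x k))).sum) := by
  induction l generalizing x with
  | nil =>
    show x = Function.update x m (x m + 0)
    rw [add_zero, Function.update_eq_self]
  | cons k l ih =>
    rw [List.foldr_cons, Equiv.trans_apply]
    have hkm : k ≠ m := hl k (List.mem_cons_self)
    rw [addPerm_apply m k (Ne.symm hkm)]
    set y := Function.update x m (x m + f k (x k)) with hy
    rw [ih (fun k' hk' => hl k' (List.mem_cons_of_mem _ hk')) y]
    have hmap : l.map (fun k' => f k' (y k')) = l.map (fun k' => f k' (x k')) := by
      apply List.map_congr_left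
      intro k' hk'
      rw [hy, Function.update_of_ne (hl k' (List.mem_cons_of_mem _ hk'))]
    rw [hmap, hy, Function.update_idem, Function.update_self, List.map_cons, List.sum_cons,
      add_assoc]

lemma pm_foldr (m : Fin n) (f : Fin n → Fin d → Fin d) (l : List (Fin n)) :
    pm d n (l.foldr (fun k e => (addPerm d n m k (f k)).trans e) (Equiv.refl _))
      = (l.map (fun k => pm d n (addPerm d n m k (f k)))).reverse.prod := by
  induction l with
  | nil => rw [List.foldr_nil, pm_one, List.map_nil, List.reverse_nil, List.prod_nil]
  | cons k l ih =>
    rw [List.foldr_cons, ← pm_mul, ih, List.map_cons, List.reverse_cons, List.prod_append,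
      List.prod_singleton]

lemma pm_foldr_symm (m : Fin n) (f : Fin n → Fin d → Fin d) (l : List (Fin n)) :
    pm d n (l.foldr (fun k e => (addPerm d n m k (f k)).trans e) (Equiv.refl _)).symm
      = (l.map (fun k => pm d n (addPerm d n m k (f k)).symm)).prod := by
  induction l with
  | nil =>
    rw [List.foldr_nil]
    rw [show (Equiv.refl (Fin n → Fin d)).symm = Equiv.refl _ from rfl]
    rw [pm_one, List.map_nil, List.prod_nil]
  | cons k l ih =>
    rw [List.foldr_cons]
    rw [show ((addPerm d n m k (f k)).trans
        (l.foldr (fun k e => (addPerm d n m k (f k)).trans e) (Equiv.refl _))).symm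
      = (l.foldr (fun k e => (addPerm d n m k (f k)).trans e) (Equiv.refl _)).symm.trans
          (addPerm d n m k (f k)).symm from rfl]
    rw [← pm_mul, ih, List.map_cons, List.prod_cons]

lemma gadget_gates (hn : 2 ≤ n) (j m : Fin n) (hjm : j ≠ m)
    (f : Fin n → Fin d → Fin d) (h : Fin d → Fin d → ℝ) :
    ∃ gl : List (Matrix (Fin n → Fin d) (Fin n → Fin d) ℂ),
      (∀ A ∈ gl, IsTwoQuditGate d n A) ∧ gl.length ≤ 2 * n ∧
      gl.prod = Dph d n (fun x => h (x j) (acc d n j m f x)) := by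
  classical
  set K : Finset (Fin n) := (Finset.univ.erase j).erase m with hK
  set ks : List (Fin n) := K.toList with hks
  have hksne : ∀ k ∈ ks, k ≠ m ∧ k ≠ j := by
    intro k hk
    rw [hks, Finset.mem_toList, hK] at hk
    obtain ⟨h1, h2⟩ := Finset.mem_erase.mp hk
    obtain ⟨h3, _⟩ := Finset.mem_erase.mp h2
    exact ⟨h1, h3⟩
  set σ := ks.foldr (fun k e => (addPerm d n m k (f k)).trans e) (Equiv.refl _) with hσ
  set ψ : (Fin n → Fin d) → ℝ := fun x => h (x j) (x m) with hψ
  refine ⟨(ks.map (fun k => pm d n (addPerm d n m k (f k)).symm))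
      ++ (Dph d n ψ :: (ks.map (fun k => pm d n (addPerm d n m k (f k)))).reverse), ?_, ?_, ?_⟩
  · intro A hA
    rcases List.mem_append.mp hA with hA | hA
    · obtain ⟨k, hk, rfl⟩ := List.mem_map.mp hA
      rw [addPerm_symm]
      exact ⟨m, k, Ne.symm (hksne k hk).1, addPerm_gate m k (Ne.symm (hksne k hk).1) _⟩
    · rcases List.mem_cons.mp hA with hA | hA
      · rw [hA]
        exact ⟨j, m, hjm, phase_gate j m hjm h⟩
      · obtain ⟨k, hk, rfl⟩ := (List.mem_map.mp (List.mem_reverse.mp hA))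
        exact ⟨m, k, Ne.symm (hksne k hk).1, addPerm_gate m k (Ne.symm (hksne k hk).1) _⟩
  · rw [List.length_append, List.length_map, List.length_cons, List.length_reverse,
      List.length_map]
    have hcard : ks.length ≤ n - 1 := by
      rw [hks, Finset.length_toList, hK]
      calc ((Finset.univ.erase j).erase m).card ≤ (Finset.univ.erase j).card :=
            Finset.card_erase_le
        _ = n - 1 := by rw [Finset.card_erase_of_mem (Finset.mem_univ j), Finset.card_univ,
            Fintype.card_fin]
    omega
  · rw [List.prod_append, List.prod_cons, ← pm_foldr, ← pm_foldr_symm, ← hσ, pm_conj]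
    have hfn : (fun x => ψ (σ x)) = (fun x => h (x j) (acc d n j m f x)) := by
      funext x
      have hσx : σ x = Function.update x m (x m + (ks.map (fun k => f k (x k))).sum) :=
        foldr_addPerm_apply m f ks (fun k hk => (hksne k hk).1) x
      show h ((σ x) j) ((σ x) m) = h (x j) (acc d n j m f x)
      rw [hσx, Function.update_of_ne hjm, Function.update_self]
      congr 1
      rw [acc]
      congr 1
      exact Finset.sum_map_toList _ _
    rw [hfn]

lemma realize_list (hn : 2 ≤ n) (l : List ((Fin n → Fin d) → ℝ))
    (hl : ∀ φ ∈ l, ∃ (j m : Fin n) (f : Fin n → Fin d → Fin d) (h : Fin d → Fin d → ℝ),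
      j ≠ m ∧ φ = fun x => h (x j) (acc d n j m f x)) :
    ∃ gl : List (Matrix (Fin n → Fin d) (Fin n → Fin d) ℂ),
      (∀ A ∈ gl, IsTwoQuditGate d n A) ∧ gl.length ≤ 2 * n * l.length ∧
      gl.prod = Dph d n l.sum := by
  induction l with
  | nil => exact ⟨[], by simp, by simp, by rw [List.prod_nil, List.sum_nil, Dph_zero]⟩
  | cons φ l ih =>
    obtain ⟨j, m, f, h, hjm, hφ⟩ := hl φ (List.mem_cons_self)
    obtain ⟨gl1, hg1, hl1, hp1⟩ := gadget_gates hn j m hjm f h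
    obtain ⟨gl2, hg2, hl2, hp2⟩ := ih (fun ψ hψ => hl ψ (List.mem_cons_of_mem _ hψ))
    refine ⟨gl1 ++ gl2, ?_, ?_, ?_⟩
    · intro A hA
      rcases List.mem_append.mp hA with hA | hA
      · exact hg1 A hA
      · exact hg2 A hA
    · rw [List.length_append, List.length_cons]
      calc gl1.length + gl2.length ≤ 2 * n + 2 * n * l.length := Nat.add_le_add hl1 hl2
        _ = 2 * n * (l.length + 1) := by ring
    · rw [List.prod_append, hp1, hp2, ← hφ, List.sum_cons, Dph_add]

end

end DPC

/-- Any diagonal unitary of relative phases on `n` qudits factors into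
`O(n·dⁿ)` two-qudit gates. -/
theorem diagonal_phase_circuit (d : ℕ) (hd : 2 ≤ d) :
    ∃ C : ℝ, 0 < C ∧ ∀ n : ℕ, 2 ≤ n → ∀ θ : (Fin n → Fin d) → ℝ,
      ∃ (L : ℕ) (G : Fin L → Matrix (Fin n → Fin d) (Fin n → Fin d) ℂ),
        (L : ℝ) ≤ C * n * (d : ℝ) ^ n ∧
        (∀ i, IsTwoQuditGate d n (G i)) ∧
        (Matrix.of fun x y => if x = y then Complex.exp (Complex.I * θ x) else 0)
          = (List.ofFn G).prod := by
  classical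
  refine ⟨2, by norm_num, ?_⟩
  intro n hn θ
  haveI : NeZero d := ⟨by omega⟩
  -- the complexified phase function lies in the span of the gadget functions
  have hspan := DPC.mem_span_Gad hd hn (fun x => ((θ x : ℝ) : ℂ))
  obtain ⟨b, hb_sub, hb_span, hb_li⟩ := exists_linearIndependent ℂ (DPC.Gad d n)
  rw [← hb_span] at hspan
  have hbfin : b.Finite := hb_li.setFinite
  haveI := hbfin.fintype
  obtain ⟨cf, hsupp, hsum⟩ := Submodule.mem_span_set.mp hspan
  -- cardinality bound
  have hcard : cf.support.card ≤ d ^ n := by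
    have h1 : Fintype.card b ≤ Module.finrank ℂ ((Fin n → Fin d) → ℂ) :=
      hb_li.fintype_card_le_finrank
    have h2 : Module.finrank ℂ ((Fin n → Fin d) → ℂ) = d ^ n := by
      rw [Module.finrank_pi, Fintype.card_fun, Fintype.card_fin, Fintype.card_fin]
    have h3 : cf.support ⊆ hbfin.toFinset := fun g hg => hbfin.mem_toFinset.mpr (hsupp hg)
    have h4 : cf.support.card ≤ hbfin.toFinset.card := Finset.card_le_card h3
    rw [hbfin.card_toFinset] at h4
    omega
  -- the real gadget list
  set supl : List ((Fin n → Fin d) → ℂ) := cf.support.toList with hsupl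
  set rl : List ((Fin n → Fin d) → ℝ) := supl.map (fun g => fun x => (cf g * g x).re) with hrl
  have hrl_gad : ∀ φ ∈ rl, ∃ (j m : Fin n) (f : Fin n → Fin d → Fin d) (h : Fin d → Fin d → ℝ),
      j ≠ m ∧ φ = fun x => h (x j) (DPC.acc d n j m f x) := by
    intro φ hφ
    obtain ⟨g, hg_mem, rfl⟩ := List.mem_map.mp hφ
    have hgGad : g ∈ DPC.Gad d n := hb_sub (hsupp (by
      rw [hsupl, Finset.mem_toList] at hg_mem
      exact hg_mem))
    obtain ⟨j, m, f, H, hjm, rfl⟩ := hgGad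
    exact ⟨j, m, f, (fun p q => (cf (DPC.gfun d n j m f H) * H p q).re), hjm, rfl⟩
  -- θ is the sum of the real gadget list
  have hlsum : ∀ (l : List ((Fin n → Fin d) → ℝ)) (x : Fin n → Fin d),
      l.sum x = (l.map (fun f => f x)).sum := by
    intro l x
    induction l with
    | nil => rfl
    | cons f l ih => rw [List.sum_cons, List.map_cons, List.sum_cons, Pi.add_apply, ih]
  have hθ : θ = rl.sum := by
    funext x
    have h1 : ((θ x : ℝ) : ℂ) = ∑ g ∈ cf.support, cf g * g x := by
      have h2 := congrFun hsum x
      rw [← h2]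
      rw [Finsupp.sum, Finset.sum_apply]
      exact Finset.sum_congr rfl fun g _ => rfl
    have h3 : θ x = ∑ g ∈ cf.support, (cf g * g x).re := by
      rw [← Complex.re_sum, ← h1, Complex.ofReal_re]
    rw [h3, hlsum rl x, hrl, List.map_map]
    rw [show ((fun f => f x) ∘ (fun g => fun y => (cf g * g y).re))
        = fun g => (cf g * g x).re from rfl]
    exact (Finset.sum_map_toList _ _).symm
  obtain ⟨gl, hglgate, hgllen, hglprod⟩ := DPC.realize_list hn rl hrl_gad
  refine ⟨gl.length, gl.get, ?_, ?_, ?_⟩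
  · have hlen : gl.length ≤ 2 * n * d ^ n := by
      have h5 : rl.length = cf.support.card := by
        rw [hrl, List.length_map, hsupl, Finset.length_toList]
      have h6 : 2 * n * rl.length ≤ 2 * n * d ^ n := by
        apply Nat.mul_le_mul_left
        rw [h5]
        exact hcard
      omega
    calc (gl.length : ℝ) ≤ ((2 * n * d ^ n : ℕ) : ℝ) := by exact_mod_cast hlen
      _ = 2 * (n : ℝ) * (d : ℝ) ^ n := by push_cast; ring
  · intro i
    exact hglgate _ (gl.get_mem i)
  · rw [List.ofFn_get, hglprod]
    rw [show (DPC.Dph d n rl.sum) = DPC.Dph d n θ from by rw [hθ]]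
    ext x y
    rw [DPC.Dph, Matrix.diagonal_apply]
    rfl
end
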